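/- arXiv:2106.12428 — 11 statements merged into one kernel-verified Lean document; each statement's English description precedes it below -/
import Mathlib

section
/- For all x with 0 ≤ x ≤ L where L ≥ 1, x log x − (x − 1) ≥ (x − 1)²/(2L). -/
/-- For `0 < x ≤ 1`, `(x^2 - 1)/2 ≤ x * log x`. -/
lemma xlogx_lower_small (x : ℝ) (hx : 0 < x) (hx1 : x ≤ 1) :
    (x ^ 2 - 1) / 2 ≤ x * Real.log x := by
  set f : ℝ → ℝ := fun y => y * Real.log y - (y ^ 2 - 1) / 2 with hf
  have hanti : AntitoneOn f (Set.Icc x 1) := by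
    apply antitoneOn_of_deriv_nonpos (convex_Icc x 1)
    · apply ContinuousOn.sub
      · exact continuousOn_id.mul (Real.continuousOn_log.mono fun y hy => by
          have := hy.1; intro h; simp at h; linarith)
      · fun_prop
    · intro y hy
      rw [interior_Icc] at hy
      have hy0 : y ≠ 0 := by have := hy.1; intro h; nlinarith
      exact (((Real.hasDerivAt_mul_log hy0).sub
        (((hasDerivAt_pow 2 y).sub_const 1).div_const 2)).differentiableAt).differentiableWithinAt
    · intro y hy
      rw [interior_Icc] at hy
      have hy0 : 0 < y := hx.trans hy.1
      have hd : HasDerivAt f (Real.log y + 1 - 2 * y ^ 1 / 2) y :=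
        (Real.hasDerivAt_mul_log hy0.ne').sub
          (((hasDerivAt_pow 2 y).sub_const 1).div_const 2)
      rw [hd.deriv]
      have hlog : Real.log y ≤ y - 1 := Real.log_le_sub_one_of_pos hy0
      simp only [pow_one]
      linarith
  have h1 : f 1 ≤ f x :=
    hanti (Set.left_mem_Icc.mpr hx1) (Set.right_mem_Icc.mpr hx1) hx1
  simp [hf] at h1
  linarith

/-- For `1 ≤ x`, `2*(x-1)/(x+1) ≤ log x`. -/
lemma log_lower_big (x : ℝ) (hx1 : 1 ≤ x) :
    2 * (x - 1) / (x + 1) ≤ Real.log x := by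
  set f : ℝ → ℝ := fun y => Real.log y - 2 * (y - 1) / (y + 1) with hf
  have hmono : MonotoneOn f (Set.Icc 1 x) := by
    apply monotoneOn_of_deriv_nonneg (convex_Icc 1 x)
    · apply ContinuousOn.sub
      · exact Real.continuousOn_log.mono fun y hy => by
          have := hy.1; intro h; simp at h; linarith
      · apply ContinuousOn.div
        · fun_prop
        · fun_prop
        · intro y hy; have := hy.1; intro h; linarith
    · intro y hy
      rw [interior_Icc] at hy
      have hy0 : 0 < y := by linarith [hy.1]
      exact (((Real.hasDerivAt_log hy0.ne').sub
        ((((hasDerivAt_id' y).sub_const 1).const_mul 2).div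
          ((hasDerivAt_id' y).add_const 1)
          (by intro h; nlinarith [hy.1]))).differentiableAt).differentiableWithinAt
    · intro y hy
      rw [interior_Icc] at hy
      have hy1 : 1 < y := hy.1
      have hy0 : 0 < y := by linarith
      have hyp : (0:ℝ) < y + 1 := by linarith
      have hd : HasDerivAt f (y⁻¹ - (2 * 1 * (y + 1) - 2 * (y - 1) * 1) / (y + 1) ^ 2) y :=
        (Real.hasDerivAt_log hy0.ne').sub
          ((((hasDerivAt_id' y).sub_const 1).const_mul 2).div
            ((hasDerivAt_id' y).add_const 1) hyp.ne')
      rw [hd.deriv, sub_nonneg, ← one_div, div_le_div_iff₀ (by positivity) hy0]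
      nlinarith [sq_nonneg (y - 1)]
  have h1 : f 1 ≤ f x :=
    hmono (Set.left_mem_Icc.mpr hx1) (Set.right_mem_Icc.mpr hx1) hx1
  simp [hf] at h1
  linarith

/-- For `0 ≤ x ≤ L` with `L ≥ 1`, `x log x - (x - 1) ≥ (x - 1)^2 / (2L)`. -/
theorem xlogx_sub_ge_sq_div (L : ℝ) (hL : 1 ≤ L) (x : ℝ) (hx0 : 0 ≤ x) (hxL : x ≤ L) :
    (x - 1) ^ 2 / (2 * L) ≤ x * Real.log x - (x - 1) := by
  have hL0 : (0:ℝ) < 2 * L := by linarith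
  rcases le_or_gt x 1 with hx1 | hx1
  · rcases eq_or_lt_of_le hx0 with h0 | h0
    · rw [← h0]
      have h : ((0:ℝ) - 1) ^ 2 / (2 * L) ≤ 1 := by rw [div_le_one hL0]; nlinarith
      simpa [Real.log_zero] using h
    · have key := xlogx_lower_small x h0 hx1
      have h2 : (x - 1) ^ 2 / (2 * L) ≤ (x - 1) ^ 2 / 2 := by
        apply div_le_div_of_nonneg_left (by positivity) (by norm_num) (by linarith)
      nlinarith
  · have hlog := log_lower_big x hx1.le
    have hx1' : (0:ℝ) < x + 1 := by linarith
    have hm : x * (2 * (x - 1) / (x + 1)) ≤ x * Real.log x :=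
      mul_le_mul_of_nonneg_left hlog hx0
    have h4 : (x - 1) ^ 2 / (x + 1) ≤ x * Real.log x - (x - 1) := by
      have he : x * (2 * (x - 1) / (x + 1)) - (x - 1) = (x - 1) ^ 2 / (x + 1) := by
        field_simp; ring
      linarith [he ▸ sub_le_sub_right hm (x - 1)]
    have h5 : (x - 1) ^ 2 / (2 * L) ≤ (x - 1) ^ 2 / (x + 1) :=
      div_le_div_of_nonneg_left (by positivity) hx1' (by linarith)
    linarith
end

section
/- Let f ∈ ℝ₊ᴺ with weights Δvᵢ > 0 and ∑ᵢ fᵢ Δvᵢ = ∑ᵢ Δvᵢ = V. Then (1/(2‖f‖_∞)) ∑ᵢ (fᵢ − 1)² Δvᵢ ≤ ∑ᵢ fᵢ log fᵢ Δvᵢ ≤ ∑ᵢ (fᵢ − 1)² Δvᵢ. -/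
/-!
Write `φ(x) = x log x - x + 1`. The mass constraint `∑ fᵢ Δvᵢ = ∑ Δvᵢ` turns the entropy into
`∑ φ(fᵢ) Δvᵢ`, so both bounds are pointwise bounds on `φ`. The upper one is `log x ≤ x - 1`. The
lower one is strong convexity: `φ'' = 1/x ≥ 1/M` on `(0, M]` and `φ(1) = φ'(1) = 0`, hence
`φ(x) ≥ (x - 1)² / (2M)` there; the mass constraint also forces `M = ‖f‖_∞ ≥ 1`.
-/

open Real Finset Set

lemma mul_log_sub_add_one_le_sq {x : ℝ} (hx : 0 ≤ x) : x * log x - x + 1 ≤ (x - 1) ^ 2 := by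
  rcases hx.eq_or_lt with rfl | hx
  · simp
  · nlinarith [mul_le_mul_of_nonneg_left (log_le_sub_one_of_pos hx) hx.le]

lemma sq_div_le_mul_log_sub_add_one {x M : ℝ} (hM : 1 ≤ M) (hx : 0 ≤ x) (hxM : x ≤ M) :
    (x - 1) ^ 2 / (2 * M) ≤ x * log x - x + 1 := by
  set g : ℝ → ℝ := fun y => y * log y - y + 1 - (y - 1) ^ 2 / (2 * M)
  have hg : ∀ y, 0 < y → HasDerivAt g (log y - (y - 1) / M) y := by
    intro y hy
    refine ((((hasDerivAt_mul_log hy.ne').sub (hasDerivAt_id y)).add_const 1).sub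
      ((((hasDerivAt_id y).sub_const 1).pow 2).div_const (2 * M))).congr_deriv ?_
    simp only [id, Nat.cast_ofNat]
    field_simp
    ring
  have hcont : Continuous g := by unfold g; fun_prop
  have hdiff : ∀ a, 0 ≤ a → DifferentiableOn ℝ g (Ioo a M) := fun a ha y hy =>
    (hg y (ha.trans_lt hy.1)).differentiableAt.differentiableWithinAt
  have hmin : IsMinOn g (Icc 0 M) 1 := by
    refine isMinOn_Icc_of_deriv hcont.continuousAt hcont.continuousAt hcont.continuousAt
      ((hdiff 0 le_rfl).mono (Ioo_subset_Ioo_right hM)) (hdiff 1 zero_le_one) ?_ ?_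
    · intro y ⟨hy0, hy1⟩
      rw [(hg y hy0).deriv, sub_nonpos]
      calc log y ≤ y - 1 := log_le_sub_one_of_pos hy0
        _ ≤ (y - 1) / M := (le_div_iff₀ (by linarith)).2 (by nlinarith)
    · intro y ⟨hy1, hyM⟩
      rw [(hg y (by linarith)).deriv, sub_nonneg]
      calc (y - 1) / M ≤ (y - 1) / y :=
            div_le_div_of_nonneg_left (by linarith) (by linarith) hyM.le
        _ = 1 - y⁻¹ := by field_simp
        _ ≤ log y := one_sub_inv_le_log_of_pos (by linarith)
  have hg1 : g 1 = 0 := by simp [g]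
  exact sub_nonneg.mp (hg1 ▸ isMinOn_iff.mp hmin x ⟨hx, hxM⟩)

section MassConstraint

variable {ι : Type*} [Fintype ι] {f w : ι → ℝ}

lemma sum_mul_log_mul_eq_of_sum_mul_eq (hmass : ∑ i, f i * w i = ∑ i, w i) :
    ∑ i, f i * log (f i) * w i = ∑ i, (f i * log (f i) - f i + 1) * w i := by
  simp only [add_mul, sub_mul, one_mul, sum_add_distrib, sum_sub_distrib, hmass]
  ring

lemma one_le_iSup_of_sum_mul_eq [Nonempty ι] (hw : ∀ i, 0 < w i)
    (hmass : ∑ i, f i * w i = ∑ i, w i) : 1 ≤ ⨆ i, f i := by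
  by_contra! hlt
  have hf : ∀ i, f i < 1 := fun i => (le_ciSup (Set.finite_range f).bddAbove i).trans_lt hlt
  have : ∑ i, f i * w i < ∑ i, w i :=
    sum_lt_sum_of_nonempty univ_nonempty fun i _ => mul_lt_of_lt_one_left (hw i) (hf i)
  exact this.ne hmass

end MassConstraint

theorem entropy_equiv_two_norm_general
    (N : ℕ) (Δv f : Fin N → ℝ)
    (hΔv : ∀ i, 0 < Δv i) (hf : ∀ i, 0 ≤ f i)
    (hmass : (∑ i, f i * Δv i) = ∑ i, Δv i) :
    (1 / (2 * ⨆ i, f i)) * (∑ i, (f i - 1) ^ 2 * Δv i) ≤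
        (∑ i, f i * Real.log (f i) * Δv i) ∧
    (∑ i, f i * Real.log (f i) * Δv i) ≤ ∑ i, (f i - 1) ^ 2 * Δv i := by
  rcases isEmpty_or_nonempty (Fin N) with hN | hN
  · simp
  have hM := one_le_iSup_of_sum_mul_eq hΔv hmass
  have hfM : ∀ i, f i ≤ ⨆ i, f i := le_ciSup (Set.finite_range f).bddAbove
  rw [sum_mul_log_mul_eq_of_sum_mul_eq hmass, mul_sum]
  constructor
  · refine sum_le_sum fun i _ => ?_
    rw [← mul_assoc, one_div_mul_eq_div]
    exact mul_le_mul_of_nonneg_right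
      (sq_div_le_mul_log_sub_add_one hM (hf i) (hfM i)) (hΔv i).le
  · exact sum_le_sum fun i _ =>
      mul_le_mul_of_nonneg_right (mul_log_sub_add_one_le_sq (hf i)) (hΔv i).le

/-- Two-sided bound between the entropy `η(f) = ∑ i, f i * log (f i) * Δv i`
and the weighted L² distance to the all-ones vector. -/
theorem entropy_equiv_two_norm
    (N : ℕ) (hN : 0 < N) (Δv f : Fin N → ℝ)
    (hΔv : ∀ i, 0 < Δv i) (hf : ∀ i, 0 ≤ f i)
    (hmass : (∑ i, f i * Δv i) = ∑ i, Δv i) :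
    (1 / (2 * ⨆ i, f i)) * (∑ i, (f i - 1) ^ 2 * Δv i) ≤
        (∑ i, f i * Real.log (f i) * Δv i) ∧
    (∑ i, f i * Real.log (f i) * Δv i) ≤ ∑ i, (f i - 1) ^ 2 * Δv i :=
  entropy_equiv_two_norm_general N Δv f hΔv hf hmass
end

section
/- Let 0 < C₀ ≤ 1, y ≥ 0, x ≥ C₀, and suppose either y ≥ C₀ or h(x) > h(y), where h(t) = t log t − t. Then |h(x) − h(y)| ≤ max(2, 2|log C₀|) · |x − y| · (|x − 1| + |y − 1|). -/
/-!
Since `h' = log`, the mean value theorem reduces the estimate to the bound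
`|log t| ≤ max 2 (2 |log C₀|) |t - 1|` for `t ≥ C₀`, applied to `t` between `x` and `y`.
If `y < C₀`, then `h` is decreasing on `[0, 1]` and `h x > h y`, so
`0 < h x - h y ≤ h x - h C₀`, and replacing `y` by `C₀` only shrinks the right-hand side.
-/

open Real Set

lemma hasDerivAt_mul_log_sub_self {t : ℝ} (ht : t ≠ 0) :
    HasDerivAt (fun t => t * log t - t) (log t) t := by
  simpa using (hasDerivAt_mul_log ht).fun_sub (hasDerivAt_id' t)

lemma antitoneOn_mul_log_sub_self : AntitoneOn (fun t => t * log t - t) (Icc 0 1) := by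
  refine antitoneOn_of_hasDerivWithinAt_nonpos (convex_Icc 0 1)
    (continuous_mul_log.sub continuous_id).continuousOn
    (fun t ht => (hasDerivAt_mul_log_sub_self ?_).hasDerivWithinAt) (fun t ht => ?_)
  all_goals rw [interior_Icc] at ht
  · exact ht.1.ne'
  · exact (log_neg ht.1 ht.2).le

lemma abs_log_le_mul_abs_sub_one {c t : ℝ} (hc : 0 < c) (hc1 : c ≤ 1) (ht : c ≤ t) :
    |log t| ≤ max 2 (2 * |log c|) * |t - 1| := by
  have ht0 : 0 < t := hc.trans_le ht
  rcases le_or_gt 1 t with h1 | h1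
  · calc |log t| = log t := abs_of_nonneg (log_nonneg h1)
      _ ≤ t - 1 := log_le_sub_one_of_pos ht0
      _ ≤ 2 * |t - 1| := by rw [abs_of_nonneg (by linarith)]; linarith
      _ ≤ _ := by gcongr; exact le_max_left _ _
  rw [abs_of_neg (log_neg ht0 h1), abs_of_neg (by linarith : t - 1 < 0), neg_sub]
  rcases le_or_gt (1 / 2) t with h2 | h2
  · calc -log t ≤ (1 - t) / t := by
          rw [sub_div, div_self ht0.ne', one_div]; linarith [one_sub_inv_le_log_of_pos ht0]
      _ ≤ 2 * (1 - t) := by rw [div_le_iff₀ ht0]; nlinarith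
      _ ≤ _ := mul_le_mul_of_nonneg_right (le_max_left _ _) (by linarith)
  · calc -log t ≤ |log c| := by
          rw [abs_of_nonpos (log_nonpos hc.le hc1)]; linarith [log_le_log hc ht]
      _ ≤ 2 * |log c| * (1 - t) := by nlinarith [abs_nonneg (log c)]
      _ ≤ _ := mul_le_mul_of_nonneg_right (le_max_right _ _) (by linarith)

lemma abs_sub_one_le_of_mem_uIcc {a b t : ℝ} (ht : t ∈ uIcc a b) :
    |t - 1| ≤ |a - 1| + |b - 1| := by
  rcases mem_uIcc.1 ht with ⟨hat, htb⟩ | ⟨hbt, hta⟩ <;>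
    cases abs_cases (a - 1) <;> cases abs_cases (b - 1) <;> cases abs_cases (t - 1) <;> linarith

lemma abs_mul_log_sub_self_sub_le {c a b : ℝ} (hc : 0 < c) (hc1 : c ≤ 1) (ha : c ≤ a)
    (hb : c ≤ b) :
    |(a * log a - a) - (b * log b - b)| ≤
      max 2 (2 * |log c|) * |a - b| * (|a - 1| + |b - 1|) := by
  have hc_le : ∀ t ∈ uIcc a b, c ≤ t := fun t ht => (le_min ha hb).trans ht.1
  have hderiv_le : ∀ t ∈ uIcc a b, ‖log t‖ ≤ max 2 (2 * |log c|) * (|a - 1| + |b - 1|) :=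
    fun t ht => (abs_log_le_mul_abs_sub_one hc hc1 (hc_le t ht)).trans <|
      mul_le_mul_of_nonneg_left (abs_sub_one_le_of_mem_uIcc ht) (le_max_of_le_left zero_le_two)
  have := (convex_uIcc a b).norm_image_sub_le_of_norm_hasDerivWithin_le
    (fun t ht => (hasDerivAt_mul_log_sub_self (hc.trans_le (hc_le t ht)).ne').hasDerivWithinAt)
    hderiv_le right_mem_uIcc left_mem_uIcc
  rw [Real.norm_eq_abs, Real.norm_eq_abs] at this
  linarith

/-- Pointwise estimate on `h(x) - h(y)` for `h(t) = t log t - t`. -/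
theorem h_diff_estimate (C₀ x y : ℝ)
    (hC₀ : 0 < C₀) (hC₀' : C₀ ≤ 1) (hy : 0 ≤ y) (hx : C₀ ≤ x)
    (hcase : C₀ ≤ y ∨ (x * Real.log x - x) > (y * Real.log y - y)) :
    |(x * Real.log x - x) - (y * Real.log y - y)| ≤
      max 2 (2 * |Real.log C₀|) * |x - y| * (|x - 1| + |y - 1|) := by
  rcases le_or_gt C₀ y with hyC | hyC
  · exact abs_mul_log_sub_self_sub_le hC₀ hC₀' hx hyC
  have hgt : y * log y - y < x * log x - x := hcase.resolve_left hyC.not_ge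
  have hy_ge : C₀ * log C₀ - C₀ ≤ y * log y - y :=
    antitoneOn_mul_log_sub_self ⟨hy, hyC.le.trans hC₀'⟩ ⟨hC₀.le, hC₀'⟩ hyC.le
  calc |(x * log x - x) - (y * log y - y)| ≤ |(x * log x - x) - (C₀ * log C₀ - C₀)| := by
        rw [abs_of_pos (sub_pos.2 hgt), abs_of_nonneg (by linarith)]; linarith
    _ ≤ max 2 (2 * |log C₀|) * |x - C₀| * (|x - 1| + |C₀ - 1|) :=
        abs_mul_log_sub_self_sub_le hC₀ hC₀' hx le_rfl
    _ ≤ max 2 (2 * |log C₀|) * |x - y| * (|x - 1| + |y - 1|) := by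
        have hxC : |x - C₀| ≤ |x - y| := by
          rw [abs_of_nonneg (by linarith), abs_of_nonneg (by linarith)]; linarith
        have hC1 : |C₀ - 1| ≤ |y - 1| := by
          rw [abs_of_nonpos (by linarith), abs_of_nonpos (by linarith)]; linarith
        gcongr
end

section
/- Let f⁽¹⁾, f⁽²⁾ ∈ ℝ₊ᴺ with ∑ᵢ fᵢ⁽¹⁾ Δvᵢ = ∑ᵢ fᵢ⁽²⁾ Δvᵢ, and suppose fᵢ⁽¹⁾ ≥ C₀ > 0 and fᵢ⁽²⁾ ≥ C₀ for all i, with C₀ ≤ 1. Then |η(f⁽¹⁾) − η(f⁽²⁾)| ≤ max(2, 2|log C₀|) · ‖f⁽¹⁾ − f⁽²⁾‖₂ · (‖f⁽¹⁾ − 1‖₂ + ‖f⁽²⁾ − 1‖₂). -/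
/-!
With `φ t = t log t - t`, conservation of mass gives
`η f⁽¹⁾ - η f⁽²⁾ = ∑ (φ f⁽¹⁾ᵢ - φ f⁽²⁾ᵢ) Δvᵢ`. Convexity of `φ` (equivalently `log x ≤ x - 1` at
`a / b` and `b / a`) places `φ a - φ b` between `(a - b) log b` and `(a - b) log a`, and on
`[C₀, ∞)` the logarithm is bounded by `max 2 (2 |log C₀|) · |t - 1|`. Weighted Cauchy–Schwarz
then splits the resulting sum.
-/

open Real Finset

theorem Finset.sum_abs_mul_abs_mul_le_sqrt_mul_sqrt {ι : Type*} (s : Finset ι)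
    (u w Δv : ι → ℝ) (hΔv : ∀ i ∈ s, 0 ≤ Δv i) :
    ∑ i ∈ s, |u i| * |w i| * Δv i ≤
      √(∑ i ∈ s, u i ^ 2 * Δv i) * √(∑ i ∈ s, w i ^ 2 * Δv i) := by
  rw [← sqrt_mul (sum_nonneg fun i hi => mul_nonneg (sq_nonneg _) (hΔv i hi))]
  refine le_sqrt_of_sq_le (sum_sq_le_sum_mul_sum_of_sq_le_mul s
    (fun i hi => mul_nonneg (sq_nonneg _) (hΔv i hi))
    (fun i hi => mul_nonneg (sq_nonneg _) (hΔv i hi)) fun i _ => le_of_eq ?_)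
  rw [mul_pow, mul_pow, sq_abs, sq_abs]
  ring

theorem Real.abs_mul_log_sub_mul_log_sub_sub_le {a b : ℝ} (ha : 0 < a) (hb : 0 < b) :
    |a * log a - b * log b - (a - b)| ≤ |a - b| * (|log a| + |log b|) := by
  have hlog_div : log (a / b) = log a - log b := log_div ha.ne' hb.ne'
  have lower : a - b ≤ a * (log a - log b) := calc
    a - b = a * (1 - (a / b)⁻¹) := by field_simp
    _ ≤ a * (log a - log b) := by
      rw [← hlog_div]; gcongr; exact one_sub_inv_le_log_of_pos (by positivity)
  have upper : b * (log a - log b) ≤ a - b := calc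
    b * (log a - log b) ≤ b * (a / b - 1) := by
      rw [← hlog_div]; gcongr; exact log_le_sub_one_of_pos (by positivity)
    _ = a - b := by field_simp
  have h₁ := neg_abs_le ((a - b) * log a)
  have h₂ := le_abs_self ((a - b) * log a)
  have h₃ := neg_abs_le ((a - b) * log b)
  have h₄ := le_abs_self ((a - b) * log b)
  rw [abs_le, mul_add, ← abs_mul, ← abs_mul]
  constructor <;> nlinarith

theorem Real.abs_log_le_of_le {C₀ t : ℝ} (hC₀ : 0 < C₀) (ht : C₀ ≤ t) :
    |log t| ≤ max 2 (2 * |log C₀|) * |t - 1| := by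
  have ht0 : 0 < t := hC₀.trans_le ht
  rcases le_or_gt 1 t with h1 | h1
  · rw [abs_of_nonneg (log_nonneg h1), abs_of_nonneg (sub_nonneg.2 h1)]
    nlinarith [log_le_sub_one_of_pos ht0, le_max_left 2 (2 * |log C₀|)]
  rw [abs_of_neg (log_neg ht0 h1), abs_of_neg (sub_neg.2 h1)]
  rcases le_or_gt (1 / 2) t with h2 | h2
  · -- `-log t ≤ t⁻¹ - 1 = (1 - t) / t ≤ 2 (1 - t)`
    have h := one_sub_inv_le_log_of_pos ht0
    have hinv : t⁻¹ * (1 - t) ≤ 2 * (1 - t) :=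
      mul_le_mul_of_nonneg_right (by rw [inv_le_comm₀ ht0 two_pos]; linarith) (by linarith)
    rw [mul_sub, mul_one, inv_mul_cancel₀ ht0.ne'] at hinv
    nlinarith [le_max_left 2 (2 * |log C₀|)]
  · have hlog : -log t ≤ |log C₀| := by
      linarith [log_le_log hC₀ ht, neg_abs_le (log C₀)]
    nlinarith [le_max_right 2 (2 * |log C₀|), abs_nonneg (log C₀)]

theorem Real.abs_mul_log_sub_mul_log_sub_sub_le_of_le {C₀ a b : ℝ} (hC₀ : 0 < C₀)
    (ha : C₀ ≤ a) (hb : C₀ ≤ b) :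
    |a * log a - b * log b - (a - b)| ≤
      max 2 (2 * |log C₀|) * (|a - b| * (|a - 1| + |b - 1|)) := by
  calc |a * log a - b * log b - (a - b)| ≤ |a - b| * (|log a| + |log b|) :=
        abs_mul_log_sub_mul_log_sub_sub_le (hC₀.trans_le ha) (hC₀.trans_le hb)
    _ ≤ |a - b| * (max 2 (2 * |log C₀|) * |a - 1| + max 2 (2 * |log C₀|) * |b - 1|) := by
        gcongr
        exacts [abs_log_le_of_le hC₀ ha, abs_log_le_of_le hC₀ hb]
    _ = _ := by ring

theorem entropy_diff_estimate_general
    (N : ℕ) (Δv f1 f2 : Fin N → ℝ) (C₀ : ℝ)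
    (hΔv : ∀ i, 0 < Δv i) (hC₀ : 0 < C₀)
    (hf1 : ∀ i, C₀ ≤ f1 i) (hf2 : ∀ i, C₀ ≤ f2 i)
    (hmass : (∑ i, f1 i * Δv i) = ∑ i, f2 i * Δv i) :
    |(∑ i, f1 i * Real.log (f1 i) * Δv i) - ∑ i, f2 i * Real.log (f2 i) * Δv i| ≤
      max 2 (2 * |Real.log C₀|) *
        Real.sqrt (∑ i, (f1 i - f2 i) ^ 2 * Δv i) *
        (Real.sqrt (∑ i, (f1 i - 1) ^ 2 * Δv i) +
          Real.sqrt (∑ i, (f2 i - 1) ^ 2 * Δv i)) := by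
  set M := max 2 (2 * |log C₀|)
  have hM : 0 ≤ M := zero_le_two.trans (le_max_left _ _)
  have hΔv' : ∀ i ∈ univ, 0 ≤ Δv i := fun i _ => (hΔv i).le
  have hflux : (∑ i, f1 i * log (f1 i) * Δv i) - ∑ i, f2 i * log (f2 i) * Δv i =
      ∑ i, (f1 i * log (f1 i) - f2 i * log (f2 i) - (f1 i - f2 i)) * Δv i := by
    simp only [sub_mul, sum_sub_distrib, hmass, sub_self, sub_zero]
  rw [hflux]
  calc _ ≤ ∑ i, |f1 i * log (f1 i) - f2 i * log (f2 i) - (f1 i - f2 i)| * Δv i := by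
        refine (abs_sum_le_sum_abs _ _).trans_eq (sum_congr rfl fun i _ => ?_)
        rw [abs_mul, abs_of_pos (hΔv i)]
    _ ≤ ∑ i, M * (|f1 i - f2 i| * (|f1 i - 1| + |f2 i - 1|)) * Δv i := by
        gcongr with i hi
        · exact hΔv' i hi
        · exact abs_mul_log_sub_mul_log_sub_sub_le_of_le hC₀ (hf1 i) (hf2 i)
    _ = M * (∑ i, |f1 i - f2 i| * |f1 i - 1| * Δv i +
          ∑ i, |f1 i - f2 i| * |f2 i - 1| * Δv i) := by
        rw [← sum_add_distrib, mul_sum]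
        exact sum_congr rfl fun i _ => by ring
    _ ≤ M * (√(∑ i, (f1 i - f2 i) ^ 2 * Δv i) * √(∑ i, (f1 i - 1) ^ 2 * Δv i) +
          √(∑ i, (f1 i - f2 i) ^ 2 * Δv i) * √(∑ i, (f2 i - 1) ^ 2 * Δv i)) := by
        gcongr <;> exact sum_abs_mul_abs_mul_le_sqrt_mul_sqrt _ _ _ _ hΔv'
    _ = _ := by ring

/-- Estimate on the entropy difference for two vectors bounded below by `C₀`. -/
theorem entropy_diff_estimate
    (N : ℕ) (Δv f1 f2 : Fin N → ℝ) (C₀ : ℝ)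
    (hΔv : ∀ i, 0 < Δv i) (hC₀ : 0 < C₀) (hC₀' : C₀ ≤ 1)
    (hf1 : ∀ i, C₀ ≤ f1 i) (hf2 : ∀ i, C₀ ≤ f2 i)
    (hmass : (∑ i, f1 i * Δv i) = ∑ i, f2 i * Δv i) :
    |(∑ i, f1 i * Real.log (f1 i) * Δv i) - ∑ i, f2 i * Real.log (f2 i) * Δv i| ≤
      max 2 (2 * |Real.log C₀|) *
        Real.sqrt (∑ i, (f1 i - f2 i) ^ 2 * Δv i) *
        (Real.sqrt (∑ i, (f1 i - 1) ^ 2 * Δv i) +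
          Real.sqrt (∑ i, (f2 i - 1) ^ 2 * Δv i)) :=
  entropy_diff_estimate_general N Δv f1 f2 C₀ hΔv hC₀ hf1 hf2 hmass
end

section
/- Let f⁽¹⁾, f⁽²⁾ ∈ ℝ₊ᴺ with equal weighted masses and η(f⁽²⁾) < η(f⁽¹⁾). If fᵢ⁽¹⁾ ≥ C₀ > 0 for all i (C₀ ≤ 1), then η(f⁽¹⁾) − η(f⁽²⁾) ≤ max(2, 2|log C₀|) · ‖f⁽¹⁾ − f⁽²⁾‖₂ · (‖f⁽¹⁾ − 1‖₂ + ‖f⁽²⁾ − 1‖₂). -/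
/-!
By convexity of `t ↦ t log t`, `η(f⁽¹⁾) - η(f⁽²⁾) ≤ ∑ (log f⁽¹⁾ᵢ + 1)(f⁽¹⁾ᵢ - f⁽²⁾ᵢ) Δvᵢ`, and the
`+ 1` term vanishes because the masses agree. On `[C₀, ∞)` the logarithm is bounded by
`max 2 (2 |log C₀|) · |x - 1|`, so Cauchy–Schwarz in the weighted `ℓ²` norm finishes the proof.
-/

open Real Finset

lemma sum_mul_mul_le_sqrt_mul_sqrt {ι : Type*} (s : Finset ι) (w f g : ι → ℝ)
    (hw : ∀ i ∈ s, 0 ≤ w i) :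
    ∑ i ∈ s, f i * g i * w i ≤ √(∑ i ∈ s, f i ^ 2 * w i) * √(∑ i ∈ s, g i ^ 2 * w i) := by
  have hsq (h : ι → ℝ) : ∀ i ∈ s, (h i * √(w i)) ^ 2 = h i ^ 2 * w i := fun i hi => by
    rw [mul_pow, sq_sqrt (hw i hi)]
  calc ∑ i ∈ s, f i * g i * w i = ∑ i ∈ s, (f i * √(w i)) * (g i * √(w i)) :=
        sum_congr rfl fun i hi => by rw [mul_mul_mul_comm, mul_self_sqrt (hw i hi)]
    _ ≤ √(∑ i ∈ s, (f i * √(w i)) ^ 2) * √(∑ i ∈ s, (g i * √(w i)) ^ 2) :=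
        sum_mul_le_sqrt_mul_sqrt s _ _
    _ = _ := by rw [sum_congr rfl (hsq f), sum_congr rfl (hsq g)]

lemma mul_log_sub_mul_log_le {x y : ℝ} (hx : 0 < x) (hy : 0 ≤ y) :
    x * log x - y * log y ≤ (log x + 1) * (x - y) := by
  rcases hy.eq_or_lt with rfl | hy
  · simp only [zero_mul, sub_zero]
    linarith [show (log x + 1) * x = x * log x + x by ring]
  · have hlog := one_sub_inv_le_log_of_pos (div_pos hy hx)
    rw [inv_div, log_div hy.ne' hx.ne'] at hlog
    have hmul := mul_le_mul_of_nonneg_left hlog hy.le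
    rw [mul_sub, mul_one, mul_div_cancel₀ _ hy.ne'] at hmul
    linarith

lemma abs_log_le_two_mul_abs_sub_one {x : ℝ} (hx : 1 / 2 ≤ x) : |log x| ≤ 2 * |x - 1| := by
  have hx₀ : 0 < x := by linarith
  have hinv : x⁻¹ ≤ 2 := by rw [inv_le_comm₀ hx₀ two_pos]; linarith
  refine abs_le.mpr ⟨?_, ?_⟩
  · calc -(2 * |x - 1|) ≤ -(|x - 1| * x⁻¹) :=
          neg_le_neg (mul_comm 2 |x - 1| ▸ mul_le_mul_of_nonneg_left hinv (abs_nonneg _))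
      _ = -|(x - 1) * x⁻¹| := by rw [abs_mul, abs_of_pos (inv_pos.mpr hx₀)]
      _ ≤ (x - 1) * x⁻¹ := neg_abs_le _
      _ = 1 - x⁻¹ := by field_simp
      _ ≤ log x := one_sub_inv_le_log_of_pos hx₀
  · linarith [log_le_sub_one_of_pos hx₀, le_abs_self (x - 1), abs_nonneg (x - 1)]

lemma abs_log_le_max_mul_abs_sub_one {C₀ x : ℝ} (hC₀ : 0 < C₀) (hx : C₀ ≤ x) :
    |log x| ≤ max 2 (2 * |log C₀|) * |x - 1| := by
  rcases le_or_gt (1 / 2) x with hx' | hx'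
  · exact (abs_log_le_two_mul_abs_sub_one hx').trans
      (mul_le_mul_of_nonneg_right (le_max_left _ _) (abs_nonneg _))
  · have hlog : |log x| ≤ |log C₀| := by
      rw [abs_of_neg (log_neg (hC₀.trans_le hx) (by linarith)),
        abs_of_neg (log_neg hC₀ (by linarith))]
      linarith [log_le_log hC₀ hx]
    have hdist : 1 / 2 < |x - 1| := by rw [abs_sub_comm, abs_of_pos (by linarith)]; linarith
    calc |log x| ≤ |log C₀| := hlog
      _ ≤ 2 * |log C₀| * |x - 1| := by nlinarith [abs_nonneg (log C₀)]
      _ ≤ _ := mul_le_mul_of_nonneg_right (le_max_right _ _) (abs_nonneg _)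

lemma mul_log_sub_mul_log_sub_le {C₀ x y : ℝ} (hC₀ : 0 < C₀) (hx : C₀ ≤ x) (hy : 0 ≤ y) :
    x * log x - y * log y - (x - y) ≤ max 2 (2 * |log C₀|) * (|x - y| * |x - 1|) :=
  calc x * log x - y * log y - (x - y) ≤ log x * (x - y) := by
        linarith [mul_log_sub_mul_log_le (hC₀.trans_le hx) hy]
    _ ≤ |log x| * |x - y| := by rw [← abs_mul]; exact le_abs_self _
    _ ≤ max 2 (2 * |log C₀|) * |x - 1| * |x - y| :=
        mul_le_mul_of_nonneg_right (abs_log_le_max_mul_abs_sub_one hC₀ hx) (abs_nonneg _)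
    _ = _ := by ring

theorem entropy_diff_estimate_one_sided_general
    (N : ℕ) (Δv f1 f2 : Fin N → ℝ) (C₀ : ℝ)
    (hΔv : ∀ i, 0 < Δv i) (hC₀ : 0 < C₀)
    (hf1 : ∀ i, C₀ ≤ f1 i) (hf2 : ∀ i, 0 ≤ f2 i)
    (hmass : (∑ i, f1 i * Δv i) = ∑ i, f2 i * Δv i) :
    (∑ i, f1 i * Real.log (f1 i) * Δv i) - (∑ i, f2 i * Real.log (f2 i) * Δv i) ≤
      max 2 (2 * |Real.log C₀|) *
        Real.sqrt (∑ i, (f1 i - f2 i) ^ 2 * Δv i) *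
        (Real.sqrt (∑ i, (f1 i - 1) ^ 2 * Δv i) +
          Real.sqrt (∑ i, (f2 i - 1) ^ 2 * Δv i)) := by
  set M := max 2 (2 * |log C₀|)
  have hM : 0 ≤ M := le_max_of_le_left zero_le_two
  calc _ = ∑ i, (f1 i * log (f1 i) - f2 i * log (f2 i) - (f1 i - f2 i)) * Δv i := by
        simp only [sub_mul, sum_sub_distrib, hmass]; ring
    _ ≤ ∑ i, M * (|f1 i - f2 i| * |f1 i - 1|) * Δv i := sum_le_sum fun i _ =>
        mul_le_mul_of_nonneg_right (mul_log_sub_mul_log_sub_le hC₀ (hf1 i) (hf2 i)) (hΔv i).le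
    _ = M * ∑ i, |f1 i - f2 i| * |f1 i - 1| * Δv i := by simp only [mul_sum, mul_assoc]
    _ ≤ M * (√(∑ i, (f1 i - f2 i) ^ 2 * Δv i) * √(∑ i, (f1 i - 1) ^ 2 * Δv i)) := by
        gcongr
        simpa only [sq_abs] using
          sum_mul_mul_le_sqrt_mul_sqrt univ Δv (fun i => |f1 i - f2 i|) (fun i => |f1 i - 1|)
            fun i _ => (hΔv i).le
    _ ≤ _ := by
        rw [← mul_assoc]
        gcongr
        exact le_add_of_nonneg_right (sqrt_nonneg _)

/-- One-sided entropy difference estimate when only `f1` is bounded below. -/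
theorem entropy_diff_estimate_one_sided
    (N : ℕ) (Δv f1 f2 : Fin N → ℝ) (C₀ : ℝ)
    (hΔv : ∀ i, 0 < Δv i) (hC₀ : 0 < C₀) (hC₀' : C₀ ≤ 1)
    (hf1 : ∀ i, C₀ ≤ f1 i) (hf2 : ∀ i, 0 ≤ f2 i)
    (hmass : (∑ i, f1 i * Δv i) = ∑ i, f2 i * Δv i)
    (hη : (∑ i, f2 i * Real.log (f2 i) * Δv i) < ∑ i, f1 i * Real.log (f1 i) * Δv i) :
    (∑ i, f1 i * Real.log (f1 i) * Δv i) - (∑ i, f2 i * Real.log (f2 i) * Δv i) ≤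
      max 2 (2 * |Real.log C₀|) *
        Real.sqrt (∑ i, (f1 i - f2 i) ^ 2 * Δv i) *
        (Real.sqrt (∑ i, (f1 i - 1) ^ 2 * Δv i) +
          Real.sqrt (∑ i, (f2 i - 1) ^ 2 * Δv i)) :=
  entropy_diff_estimate_one_sided_general N Δv f1 f2 C₀ hΔv hC₀ hf1 hf2 hmass
end

section
/- Let f, g ∈ ℝ₊ᴺ with equal weighted masses equal to the total weight V, suppose fᵢ ≥ C₀ > 0 for all i, η(f) > η(g), and let β ∈ (0,1] satisfy η(f + β(1 − f)) = η(g). Then ‖β(1 − f)‖₂ ≤ M ‖f − g‖₂ where M = 2 max(2, 2|log C₀|) ‖f‖_∞ (1 + √(‖g‖_∞)). -/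
open Finset Real

private lemma log_aux (a b : ℝ) (ha : 0 < a) (hb : 0 < b) :
    a * Real.log b + a - b ≤ a * Real.log a := by
  have h := Real.log_le_sub_one_of_pos (show 0 < b / a by positivity)
  rw [Real.log_div hb.ne' ha.ne'] at h
  have h' : a * (Real.log b - Real.log a) ≤ a * (b / a - 1) :=
    mul_le_mul_of_nonneg_left h ha.le
  have he : a * (b / a - 1) = b - a := by field_simp
  nlinarith [h']

private lemma quad_lower (x : ℝ) (hx : 0 < x) :
    (Real.sqrt x - 1) ^ 2 ≤ x * Real.log x - x + 1 := by
  have hs : 0 < Real.sqrt x := Real.sqrt_pos.2 hx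
  have h := Real.one_sub_inv_le_log_of_pos hs
  have hlog : Real.log (Real.sqrt x) = Real.log x / 2 := Real.log_sqrt hx.le
  have hsq : Real.sqrt x * Real.sqrt x = x := Real.mul_self_sqrt hx.le
  rw [hlog] at h
  have h2 : (1 - (Real.sqrt x)⁻¹) * Real.sqrt x ≤ (Real.log x / 2) * Real.sqrt x :=
    mul_le_mul_of_nonneg_right h hs.le
  rw [sub_mul, one_mul, inv_mul_cancel₀ hs.ne'] at h2
  -- h2 : √x - 1 ≤ log x / 2 * √x
  nlinarith [mul_le_mul_of_nonneg_right h2 hs.le]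

private lemma gibbs (x y : ℝ) (hx : 0 < x) (hy : 0 ≤ y) :
    x * Real.log x - y * Real.log y ≤ (Real.log x + 1) * (x - y) := by
  rcases eq_or_lt_of_le hy with h | h
  · simp [← h]; nlinarith
  · have := log_aux y x h hx
    nlinarith

private lemma conv_step (x β : ℝ) (hx : 0 < x) (hβ0 : 0 ≤ β) (hβ1 : β ≤ 1) :
    (x + β * (1 - x)) * Real.log (x + β * (1 - x)) ≤ (1 - β) * (x * Real.log x) := by
  set z := x + β * (1 - x) with hz
  have hzpos : 0 < z := by
    rcases eq_or_lt_of_le hβ0 with h | h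
    · simp only [hz, ← h]; simpa using hx
    · nlinarith [mul_nonneg (by linarith : (0:ℝ) ≤ 1 - β) hx.le]
  have h1 := log_aux x z hx hzpos
  have h2 : Real.log z ≤ z - 1 := Real.log_le_sub_one_of_pos hzpos
  nlinarith [mul_le_mul_of_nonneg_left h2 hβ0, mul_le_mul_of_nonneg_left h1 (by linarith : (0:ℝ) ≤ 1 - β)]

private lemma log_abs_bound (C₀ x : ℝ) (h0 : 0 < C₀) (hx : C₀ ≤ x) :
    |Real.log x| ≤ max 2 (2 * |Real.log C₀|) * |x - 1| := by
  have hxpos : 0 < x := lt_of_lt_of_le h0 hx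
  set K := max 2 (2 * |Real.log C₀|) with hK
  have hK2 : (2:ℝ) ≤ K := le_max_left _ _
  rcases le_or_gt 1 x with h1 | h1
  · have hl : 0 ≤ Real.log x := Real.log_nonneg h1
    rw [abs_of_nonneg hl, abs_of_nonneg (by linarith : (0:ℝ) ≤ x - 1)]
    have := Real.log_le_sub_one_of_pos hxpos
    nlinarith
  · have hl : Real.log x ≤ 0 := Real.log_nonpos hxpos.le h1.le
    rw [abs_of_nonpos hl, abs_of_neg (by linarith : x - 1 < 0)]
    rcases le_or_gt (1/2 : ℝ) x with h2 | h2
    · -- -log x ≤ 1/x - 1 ≤ 2(1-x)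
      have hinv := Real.one_sub_inv_le_log_of_pos hxpos
      have hxi : x⁻¹ ≤ 2 := by
        rw [inv_le_comm₀ hxpos (by norm_num)]; linarith
      have : -Real.log x ≤ x⁻¹ - 1 := by linarith
      have h3 : x⁻¹ - 1 ≤ 2 * (1 - x) := by
        have : x⁻¹ * x = 1 := inv_mul_cancel₀ hxpos.ne'
        nlinarith
      nlinarith
    · -- C₀ ≤ x < 1/2 : -log x ≤ -log C₀ = |log C₀| ≤ K/2 ≤ K(1-x)
      have hlC : Real.log C₀ ≤ Real.log x := Real.log_le_log h0 hx
      have hC1 : C₀ < 1 := lt_of_le_of_lt hx (by linarith)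
      have hlCneg : Real.log C₀ ≤ 0 := Real.log_nonpos h0.le hC1.le
      have habs : |Real.log C₀| = -Real.log C₀ := abs_of_nonpos hlCneg
      have hKC : 2 * |Real.log C₀| ≤ K := le_max_right _ _
      have : -Real.log x ≤ |Real.log C₀| := by rw [habs]; linarith
      nlinarith

set_option maxHeartbeats 1000000 in
/-- Theorem 2.2: the entropy fix is controlled by the L² error when the
numerical solution is bounded below by `C₀`. -/
theorem entropy_fix_L2_bound
    (N : ℕ) (hN : 0 < N) (Δv f g : Fin N → ℝ) (C₀ β : ℝ)
    (hΔv : ∀ i, 0 < Δv i) (hC₀ : 0 < C₀) (hC₀' : C₀ ≤ 1)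
    (hf : ∀ i, C₀ ≤ f i) (hg : ∀ i, 0 ≤ g i)
    (hmassf : (∑ i, f i * Δv i) = ∑ i, Δv i)
    (hmassg : (∑ i, g i * Δv i) = ∑ i, Δv i)
    (hη : (∑ i, g i * Real.log (g i) * Δv i) < ∑ i, f i * Real.log (f i) * Δv i)
    (hβ0 : 0 < β) (hβ1 : β ≤ 1)
    (hfix : (∑ i, (f i + β * (1 - f i)) * Real.log (f i + β * (1 - f i)) * Δv i) =
      ∑ i, g i * Real.log (g i) * Δv i) :
    Real.sqrt (∑ i, (β * (1 - f i)) ^ 2 * Δv i) ≤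
      (2 * max 2 (2 * |Real.log C₀|) * (⨆ i, f i) * (1 + Real.sqrt (⨆ i, g i))) *
        Real.sqrt (∑ i, (f i - g i) ^ 2 * Δv i) := by
  haveI : Nonempty (Fin N) := ⟨⟨0, hN⟩⟩
  set S := ⨆ i, f i with hS
  set G := ⨆ i, g i with hG
  set K := max 2 (2 * |Real.log C₀|) with hK
  set P := ∑ i, (1 - f i) ^ 2 * Δv i with hP
  set Q := ∑ i, (f i - g i) ^ 2 * Δv i with hQ
  have hK2 : (2:ℝ) ≤ K := le_max_left _ _
  have hfpos : ∀ i, 0 < f i := fun i => lt_of_lt_of_le hC₀ (hf i)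
  have hfS : ∀ i, f i ≤ S := fun i => le_ciSup (Set.Finite.bddAbove (Set.finite_range f)) i
  have hgG : ∀ i, g i ≤ G := fun i => le_ciSup (Set.Finite.bddAbove (Set.finite_range g)) i
  have hVpos : 0 < ∑ i, Δv i := Finset.sum_pos (fun i _ => hΔv i) Finset.univ_nonempty
  have hS1 : 1 ≤ S := by
    by_contra hc
    push_neg at hc
    have : ∑ i, f i * Δv i < ∑ i, Δv i := by
      calc ∑ i, f i * Δv i ≤ ∑ i, S * Δv i :=
            Finset.sum_le_sum (fun i _ => mul_le_mul_of_nonneg_right (hfS i) (hΔv i).le)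
        _ = S * ∑ i, Δv i := by rw [Finset.mul_sum]
        _ < ∑ i, Δv i := by nlinarith
    linarith [hmassf ▸ this]
  have hG1 : 1 ≤ G := by
    by_contra hc
    push_neg at hc
    have : ∑ i, g i * Δv i < ∑ i, Δv i := by
      calc ∑ i, g i * Δv i ≤ ∑ i, G * Δv i :=
            Finset.sum_le_sum (fun i _ => mul_le_mul_of_nonneg_right (hgG i) (hΔv i).le)
        _ = G * ∑ i, Δv i := by rw [Finset.mul_sum]
        _ < ∑ i, Δv i := by nlinarith
    linarith [hmassg ▸ this]
  have hPnn : 0 ≤ P := Finset.sum_nonneg fun i _ => mul_nonneg (sq_nonneg _) (hΔv i).le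
  have hQnn : 0 ≤ Q := Finset.sum_nonneg fun i _ => mul_nonneg (sq_nonneg _) (hΔv i).le
  -- mass differences vanish
  have massf0 : ∑ i, (f i - 1) * Δv i = 0 := by
    have : ∑ i, (f i - 1) * Δv i = (∑ i, f i * Δv i) - ∑ i, Δv i := by
      rw [← Finset.sum_sub_distrib]; congr 1; ext i; ring
    rw [this, hmassf, sub_self]
  have massfg0 : ∑ i, (f i - g i) * Δv i = 0 := by
    have : ∑ i, (f i - g i) * Δv i = (∑ i, f i * Δv i) - ∑ i, g i * Δv i := by
      rw [← Finset.sum_sub_distrib]; congr 1; ext i; ring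
    rw [this, hmassf, hmassg, sub_self]
  set ηf := ∑ i, f i * Real.log (f i) * Δv i with hηf
  set ηg := ∑ i, g i * Real.log (g i) * Δv i with hηg
  -- Step 2 : P ≤ (1+√S)^2 * ηf
  have step2 : P ≤ (1 + Real.sqrt S) ^ 2 * ηf := by
    have hpt : ∀ i, (1 - f i) ^ 2 ≤
        (1 + Real.sqrt S) ^ 2 * (f i * Real.log (f i) - f i + 1) := by
      intro i
      have hq := quad_lower (f i) (hfpos i)
      have hsf : Real.sqrt (f i) ≤ Real.sqrt S := Real.sqrt_le_sqrt (hfS i)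
      have hsf0 : 0 ≤ Real.sqrt (f i) := Real.sqrt_nonneg _
      have hmul : Real.sqrt (f i) * Real.sqrt (f i) = f i := Real.mul_self_sqrt (hfpos i).le
      nlinarith [sq_nonneg (Real.sqrt (f i) - 1), sq_nonneg (Real.sqrt (f i) + 1),
        mul_le_mul hsf hsf hsf0 (Real.sqrt_nonneg S)]
    calc P ≤ ∑ i, ((1 + Real.sqrt S) ^ 2 * (f i * Real.log (f i) - f i + 1)) * Δv i :=
          Finset.sum_le_sum (fun i _ => mul_le_mul_of_nonneg_right (hpt i) (hΔv i).le)
      _ = (1 + Real.sqrt S) ^ 2 * ηf - (1 + Real.sqrt S) ^ 2 * ∑ i, (f i - 1) * Δv i := by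
          rw [hηf, Finset.mul_sum, Finset.mul_sum, ← Finset.sum_sub_distrib]
          congr 1; ext i; ring
      _ = (1 + Real.sqrt S) ^ 2 * ηf := by rw [massf0, mul_zero, sub_zero]
  -- Step 1 : β * ηf ≤ ηf - ηg
  have step1 : β * ηf ≤ ηf - ηg := by
    have hpt : ∀ i, (f i + β * (1 - f i)) * Real.log (f i + β * (1 - f i)) ≤
        (1 - β) * (f i * Real.log (f i)) := fun i => conv_step (f i) β (hfpos i) hβ0.le hβ1
    have hsum : ηg ≤ (1 - β) * ηf := by
      rw [← hfix, hηf, Finset.mul_sum]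
      exact Finset.sum_le_sum fun i _ => by
        have := mul_le_mul_of_nonneg_right (hpt i) (hΔv i).le
        calc (f i + β * (1 - f i)) * Real.log (f i + β * (1 - f i)) * Δv i
            ≤ (1 - β) * (f i * Real.log (f i)) * Δv i := this
          _ = (1 - β) * (f i * Real.log (f i) * Δv i) := by ring
    nlinarith
  -- Step 3 : ηf - ηg ≤ K * √P * √Q
  have step3 : ηf - ηg ≤ K * (Real.sqrt P * Real.sqrt Q) := by
    have h1 : ηf - ηg ≤ ∑ i, Real.log (f i) * (f i - g i) * Δv i := by
      have : ηf - ηg = ∑ i, (f i * Real.log (f i) - g i * Real.log (g i)) * Δv i := by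
        rw [hηf, hηg, ← Finset.sum_sub_distrib]; congr 1; ext i; ring
      rw [this]
      have : ∑ i, ((Real.log (f i) + 1) * (f i - g i)) * Δv i
          = (∑ i, Real.log (f i) * (f i - g i) * Δv i) + ∑ i, (f i - g i) * Δv i := by
        rw [← Finset.sum_add_distrib]; congr 1; ext i; ring
      calc ∑ i, (f i * Real.log (f i) - g i * Real.log (g i)) * Δv i
          ≤ ∑ i, ((Real.log (f i) + 1) * (f i - g i)) * Δv i :=
            Finset.sum_le_sum fun i _ =>
              mul_le_mul_of_nonneg_right (gibbs (f i) (g i) (hfpos i) (hg i)) (hΔv i).le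
        _ = (∑ i, Real.log (f i) * (f i - g i) * Δv i) + ∑ i, (f i - g i) * Δv i := this
        _ = ∑ i, Real.log (f i) * (f i - g i) * Δv i := by rw [massfg0, add_zero]
    have h2 : ∑ i, Real.log (f i) * (f i - g i) * Δv i
        ≤ K * ∑ i, (|1 - f i| * Real.sqrt (Δv i)) * (|f i - g i| * Real.sqrt (Δv i)) := by
      rw [Finset.mul_sum]
      refine Finset.sum_le_sum fun i _ => ?_
      have hsq : Real.sqrt (Δv i) * Real.sqrt (Δv i) = Δv i := Real.mul_self_sqrt (hΔv i).le
      have hb := log_abs_bound C₀ (f i) hC₀ (hf i)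
      have habs : Real.log (f i) * (f i - g i) * Δv i ≤ |Real.log (f i)| * |f i - g i| * Δv i := by
        have := abs_mul (Real.log (f i)) (f i - g i)
        have h3 : Real.log (f i) * (f i - g i) ≤ |Real.log (f i)| * |f i - g i| := by
          rw [← this]; exact le_abs_self _
        exact mul_le_mul_of_nonneg_right h3 (hΔv i).le
      have h5 : |Real.log (f i)| * |f i - g i| ≤ (K * |f i - 1|) * |f i - g i| :=
        mul_le_mul_of_nonneg_right hb (abs_nonneg _)
      calc Real.log (f i) * (f i - g i) * Δv i
          ≤ |Real.log (f i)| * |f i - g i| * Δv i := habs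
        _ ≤ (K * |f i - 1|) * |f i - g i| * Δv i :=
            mul_le_mul_of_nonneg_right h5 (hΔv i).le
        _ = K * ((|1 - f i| * Real.sqrt (Δv i)) * (|f i - g i| * Real.sqrt (Δv i))) := by
            rw [abs_sub_comm (f i) 1,
              show (|1 - f i| * Real.sqrt (Δv i)) * (|f i - g i| * Real.sqrt (Δv i))
                = |1 - f i| * |f i - g i| * (Real.sqrt (Δv i) * Real.sqrt (Δv i)) from by ring,
              hsq]; ring
    have hPeq : ∑ i, (|1 - f i| * Real.sqrt (Δv i)) ^ 2 = P := by
      rw [hP]; congr 1; ext i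
      rw [mul_pow, sq_abs, Real.sq_sqrt (hΔv i).le]
    have hQeq : ∑ i, (|f i - g i| * Real.sqrt (Δv i)) ^ 2 = Q := by
      rw [hQ]; congr 1; ext i
      rw [mul_pow, sq_abs, Real.sq_sqrt (hΔv i).le]
    have hcs := Real.sum_mul_le_sqrt_mul_sqrt Finset.univ
      (fun i => |1 - f i| * Real.sqrt (Δv i)) (fun i => |f i - g i| * Real.sqrt (Δv i))
    rw [hPeq, hQeq] at hcs
    calc ηf - ηg ≤ ∑ i, Real.log (f i) * (f i - g i) * Δv i := h1
      _ ≤ K * ∑ i, (|1 - f i| * Real.sqrt (Δv i)) * (|f i - g i| * Real.sqrt (Δv i)) := h2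
      _ ≤ K * (Real.sqrt P * Real.sqrt Q) :=
          mul_le_mul_of_nonneg_left hcs (by linarith)
  -- combine
  have hsS1 : 1 ≤ Real.sqrt S := Real.one_le_sqrt.2 hS1
  have hsG1 : 1 ≤ Real.sqrt G := Real.one_le_sqrt.2 hG1
  have hSsq : Real.sqrt S * Real.sqrt S = S := Real.mul_self_sqrt (by linarith)
  have hconst : (1 + Real.sqrt S) ^ 2 * K ≤ 2 * K * S * (1 + Real.sqrt G) := by
    have h : (1 + Real.sqrt S) ^ 2 ≤ 2 * S * (1 + Real.sqrt G) := by
      nlinarith [hsS1, hsG1, hSsq]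
    calc (1 + Real.sqrt S) ^ 2 * K ≤ (2 * S * (1 + Real.sqrt G)) * K :=
          mul_le_mul_of_nonneg_right h (by linarith)
      _ = 2 * K * S * (1 + Real.sqrt G) := by ring
  have hkey : β * P ≤ (2 * K * S * (1 + Real.sqrt G)) * (Real.sqrt Q * Real.sqrt P) := by
    have hqp : 0 ≤ Real.sqrt P * Real.sqrt Q :=
      mul_nonneg (Real.sqrt_nonneg _) (Real.sqrt_nonneg _)
    calc β * P ≤ β * ((1 + Real.sqrt S) ^ 2 * ηf) :=
          mul_le_mul_of_nonneg_left step2 hβ0.le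
      _ = (1 + Real.sqrt S) ^ 2 * (β * ηf) := by ring
      _ ≤ (1 + Real.sqrt S) ^ 2 * (K * (Real.sqrt P * Real.sqrt Q)) :=
          mul_le_mul_of_nonneg_left (le_trans step1 step3) (sq_nonneg _)
      _ = ((1 + Real.sqrt S) ^ 2 * K) * (Real.sqrt P * Real.sqrt Q) := by ring
      _ ≤ (2 * K * S * (1 + Real.sqrt G)) * (Real.sqrt P * Real.sqrt Q) :=
          mul_le_mul_of_nonneg_right hconst hqp
      _ = (2 * K * S * (1 + Real.sqrt G)) * (Real.sqrt Q * Real.sqrt P) := by ring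
  have hLHS : ∑ i, (β * (1 - f i)) ^ 2 * Δv i = β ^ 2 * P := by
    rw [hP, Finset.mul_sum]; congr 1; ext i; ring
  rw [hLHS, Real.sqrt_mul (sq_nonneg β), Real.sqrt_sq hβ0.le]
  rcases eq_or_lt_of_le hPnn with hP0 | hPpos
  · rw [← hP0, Real.sqrt_zero, mul_zero]
    have h1 : (0:ℝ) ≤ 2 * K * S := by nlinarith
    have h2 : (0:ℝ) ≤ 1 + Real.sqrt G := by linarith
    exact mul_nonneg (mul_nonneg h1 h2) (Real.sqrt_nonneg _)
  · have hsP : 0 < Real.sqrt P := Real.sqrt_pos.2 hPpos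
    have hPP : Real.sqrt P * Real.sqrt P = P := Real.mul_self_sqrt hPnn
    have : (β * Real.sqrt P) * Real.sqrt P ≤
        ((2 * K * S * (1 + Real.sqrt G)) * Real.sqrt Q) * Real.sqrt P := by
      calc (β * Real.sqrt P) * Real.sqrt P = β * P := by rw [mul_assoc, hPP]
        _ ≤ (2 * K * S * (1 + Real.sqrt G)) * (Real.sqrt Q * Real.sqrt P) := hkey
        _ = ((2 * K * S * (1 + Real.sqrt G)) * Real.sqrt Q) * Real.sqrt P := by ring
    exact le_of_mul_le_mul_right this hsP
end

section
/- For every C₁ ∈ (0,1] there exists C₂ > 1 such that F(x, y, C₂) ≥ 1/C₁ for all 0 ≤ x ≤ 1/2 and 0 ≤ y ≤ 1/(2C₂), where F(x,y,C) = (h(x+y) − h(x+Cy))/(h(x) − h(x+y)). -/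
/-- Tangent-line lower bound for `h(a) - h(b)` where `h t = t log t - t`. -/
lemma tangent_lower (a b : ℝ) (ha : 0 ≤ a) (hb : 0 < b) (hab : a ≤ b) :
    (b - a) * (-Real.log b) ≤ (a * Real.log a - a) - (b * Real.log b - b) := by
  rcases ha.eq_or_lt with h0 | h0
  · rw [← h0]; simp; nlinarith [hb.le]
  · have h1 : Real.log b - Real.log a ≤ b / a - 1 := by
      have := Real.log_le_sub_one_of_pos (div_pos hb h0)
      rwa [Real.log_div hb.ne' h0.ne'] at this
    have h2 : a * (Real.log b - Real.log a) ≤ b - a := by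
      have h3 := mul_le_mul_of_nonneg_left h1 h0.le
      have h4 : a * (b / a - 1) = b - a := by field_simp
      linarith
    nlinarith [h2]

/-- Tangent-line upper bound for `h(a) - h(b)`. -/
lemma tangent_upper (a b : ℝ) (ha : 0 < a) (hab : a ≤ b) :
    (a * Real.log a - a) - (b * Real.log b - b) ≤ (b - a) * (-Real.log a) := by
  have hb : 0 < b := ha.trans_le hab
  have h1 : Real.log a - Real.log b ≤ a / b - 1 := by
    have := Real.log_le_sub_one_of_pos (div_pos ha hb)
    rwa [Real.log_div ha.ne' hb.ne'] at this
  have h2 : b * (Real.log a - Real.log b) ≤ a - b := by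
    have h3 := mul_le_mul_of_nonneg_left h1 hb.le
    have h4 : b * (a / b - 1) = a - b := by field_simp
    linarith
  nlinarith [h2]

/-- `h` is antitone on `[0,1]`. -/
lemma h_anti (a b : ℝ) (ha : 0 ≤ a) (hab : a ≤ b) (hb : 0 < b) (hb1 : b ≤ 1) :
    b * Real.log b - b ≤ a * Real.log a - a := by
  have h1 := tangent_lower a b ha hb hab
  have h2 : Real.log b ≤ 0 := Real.log_nonpos hb.le hb1
  nlinarith [mul_nonneg (sub_nonneg.2 hab) (neg_nonneg.2 h2)]

/-- `h` is superadditive on nonnegatives. -/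
lemma h_superadd (x y : ℝ) (hx : 0 ≤ x) (hy : 0 ≤ y) :
    (x * Real.log x - x) + (y * Real.log y - y) ≤ (x + y) * Real.log (x + y) - (x + y) := by
  have k : ∀ a b : ℝ, 0 ≤ a → 0 ≤ b → a * Real.log a ≤ a * Real.log (a + b) := by
    intro a b ha hb
    rcases ha.eq_or_lt with h0 | h0
    · rw [← h0]; simp
    · exact mul_le_mul_of_nonneg_left (Real.log_le_log h0 (by linarith)) ha
  have k1 := k x y hx hy
  have k2 := k y x hy hx
  rw [add_comm y x] at k2
  nlinarith [k1, k2]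

set_option maxHeartbeats 2000000 in
/-- Lemma 3.8: for every `C₁ ∈ (0,1]` there exists `C₂ > 1` such that
`F(x, y, C₂) ≥ 1 / C₁` on the domain `0 ≤ x ≤ 1/2`, `0 < y ≤ 1/(2C₂)`,
where `F(x,y,C) = (h(x+y) - h(x+Cy)) / (h(x) - h(x+y))` and
`h(t) = t log t - t`. -/
theorem quotient_lower_bound (C₁ : ℝ) (hC₁ : 0 < C₁) (hC₁' : C₁ ≤ 1) :
    ∃ C₂ : ℝ, 1 < C₂ ∧
      ∀ x y : ℝ, 0 ≤ x → x ≤ 1 / 2 → 0 < y → y ≤ 1 / (2 * C₂) →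
        1 / C₁ ≤
          (((x + y) * Real.log (x + y) - (x + y)) -
              ((x + C₂ * y) * Real.log (x + C₂ * y) - (x + C₂ * y))) /
            ((x * Real.log x - x) - ((x + y) * Real.log (x + y) - (x + y))) := by
  obtain ⟨M, hMdef⟩ : ∃ M : ℝ, M = 1 / C₁ := ⟨_, rfl⟩
  rw [← hMdef]
  have hM : 1 ≤ M := hMdef ▸ one_le_one_div hC₁ hC₁'
  have hM0 : 0 < M := lt_of_lt_of_le one_pos hM
  have hM2 : 1 ≤ M * M := by nlinarith [hM]
  have hM3 : M ≤ M * M := by nlinarith [hM]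
  refine ⟨10000 * M ^ 2, by nlinarith [hM2], ?_⟩
  intro x y hx hx2 hy hyN
  obtain ⟨N, hNdef⟩ : ∃ N : ℝ, N = 10000 * M ^ 2 := ⟨_, rfl⟩
  rw [← hNdef] at hyN ⊢
  have hN : 10000 ≤ N := by rw [hNdef]; nlinarith [hM2]
  have h2N : (0 : ℝ) < 2 * N := by linarith
  have hNy : N * y ≤ 1 / 2 := by
    have h1 : y * (2 * N) ≤ 1 := (le_div_iff₀ h2N).mp hyN
    nlinarith
  have hxy1 : x + y < 1 := by
    nlinarith [mul_pos (show (0:ℝ) < N - 1 by linarith) hy]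
  have hxy0 : 0 < x + y := by linarith
  have hxNy0 : 0 < x + N * y := by
    nlinarith [mul_pos (show (0:ℝ) < N by linarith) hy]
  have hxNy1 : x + N * y ≤ 1 := by linarith
  -- denominator positivity and bounds
  have hlogxy : Real.log (x + y) < 0 := Real.log_neg hxy0 hxy1
  have hD1 : y * (-Real.log (x + y)) ≤
      (x * Real.log x - x) - ((x + y) * Real.log (x + y) - (x + y)) := by
    have := tangent_lower x (x + y) hx hxy0 (by linarith)
    nlinarith [this]
  have hDpos : 0 < (x * Real.log x - x) - ((x + y) * Real.log (x + y) - (x + y)) := by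
    nlinarith [mul_pos hy (show 0 < -Real.log (x + y) by linarith)]
  have hDub2 : (x * Real.log x - x) - ((x + y) * Real.log (x + y) - (x + y)) ≤
      y - y * Real.log y := by
    have := h_superadd x y hx hy.le
    linarith
  -- numerator lower bound
  have hNum1 : (N * y - y) * (-Real.log (x + N * y)) ≤
      ((x + y) * Real.log (x + y) - (x + y)) -
        ((x + N * y) * Real.log (x + N * y) - (x + N * y)) := by
    have := tangent_lower (x + y) (x + N * y) (by linarith) hxNy0
      (by nlinarith [mul_nonneg (show (0:ℝ) ≤ N - 1 by linarith) hy.le])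
    nlinarith [this]
  have hNym : 0 ≤ N * y - y := by
    nlinarith [mul_nonneg (show (0:ℝ) ≤ N - 1 by linarith) hy.le]
  -- logarithm size estimates
  have hN1pos : (0 : ℝ) < N + 1 := by linarith
  have ha1 : Real.log (N + 1) ≤ 202 * M := by
    have s0 : Real.sqrt (N + 1) ≤ 101 * M := by
      have s := Real.sqrt_le_sqrt (show N + 1 ≤ (101 * M) ^ 2 by rw [hNdef]; nlinarith [hM2])
      rwa [Real.sqrt_sq (by linarith)] at s
    have s1 : Real.log (Real.sqrt (N + 1)) ≤ Real.sqrt (N + 1) - 1 :=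
      Real.log_le_sub_one_of_pos (Real.sqrt_pos.2 hN1pos)
    have s2 : Real.log (N + 1) = 2 * Real.log (Real.sqrt (N + 1)) := by
      rw [Real.log_sqrt hN1pos.le]; ring
    linarith
  have ha1nn : 0 ≤ Real.log (N + 1) := Real.log_nonneg (by linarith)
  have ha2 : Real.log (2 * N) ≤ 284 * M := by
    have s0 : Real.sqrt (2 * N) ≤ 142 * M := by
      have s := Real.sqrt_le_sqrt (show 2 * N ≤ (142 * M) ^ 2 by rw [hNdef]; nlinarith [hM2])
      rwa [Real.sqrt_sq (by linarith)] at s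
    have s1 : Real.log (Real.sqrt (2 * N)) ≤ Real.sqrt (2 * N) - 1 :=
      Real.log_le_sub_one_of_pos (Real.sqrt_pos.2 h2N)
    have s2 : Real.log (2 * N) = 2 * Real.log (Real.sqrt (2 * N)) := by
      rw [Real.log_sqrt h2N.le]; ring
    linarith
  have hgap : (1 : ℝ) / 4 ≤ Real.log (2 * N) - Real.log (N + 1) := by
    have e1 : Real.log (2 * N / (N + 1)) = Real.log (2 * N) - Real.log (N + 1) :=
      Real.log_div (by linarith) (by linarith)
    have e2 : Real.log ((4 : ℝ) / 3) ≤ Real.log (2 * N / (N + 1)) :=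
      Real.log_le_log (by norm_num)
        (by rw [div_le_div_iff₀ (by norm_num) hN1pos]; nlinarith)
    have e3 : (1 : ℝ) / 4 ≤ Real.log ((4 : ℝ) / 3) := by
      have l1 := Real.log_le_sub_one_of_pos (show (0:ℝ) < 3 / 4 by norm_num)
      have e4 : Real.log ((4 : ℝ) / 3) = -Real.log ((3 : ℝ) / 4) := by
        rw [← Real.log_inv]; norm_num
      linarith
    linarith
  rw [le_div_iff₀ hDpos]
  by_cases hxbig : Real.exp (-(2 * Real.log (N + 1))) ≤ x
  · -- x bounded away from 0
    have hx0 : 0 < x := lt_of_lt_of_le (Real.exp_pos _) hxbig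
    have hA : -Real.log x ≤ 2 * Real.log (N + 1) := by
      have l := Real.log_le_log (Real.exp_pos _) hxbig
      rw [Real.log_exp] at l; linarith
    have hDub1 : (x * Real.log x - x) - ((x + y) * Real.log (x + y) - (x + y)) ≤
        y * (-Real.log x) := by
      have := tangent_upper x (x + y) hx0 (by linarith)
      nlinarith [this]
    have hm0 : 0 < x + N / 2 * y := by
      nlinarith [mul_pos (show (0:ℝ) < N / 2 by linarith) hy]
    have hm34 : x + N / 2 * y ≤ 3 / 4 := by nlinarith
    have hmle : x + N / 2 * y ≤ x + N * y := by
      nlinarith [mul_nonneg (show (0:ℝ) ≤ N / 2 by linarith) hy.le]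
    have hmono := h_anti (x + N / 2 * y) (x + N * y) hm0.le hmle hxNy0 hxNy1
    have htan := tangent_lower (x + y) (x + N / 2 * y) (by linarith) hm0
      (by nlinarith [mul_nonneg (show (0:ℝ) ≤ N / 2 - 1 by linarith) hy.le])
    have hlogm : Real.log (x + N / 2 * y) ≤ -(1 / 4) := by
      have l1 : Real.log (x + N / 2 * y) ≤ Real.log ((3:ℝ)/4) := Real.log_le_log hm0 hm34
      have l2 := Real.log_le_sub_one_of_pos (show (0:ℝ) < 3 / 4 by norm_num)
      linarith
    have e1 : ((x + N / 2 * y) - (x + y)) * (1 / 4) ≤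
        ((x + N / 2 * y) - (x + y)) * (-Real.log (x + N / 2 * y)) :=
      mul_le_mul_of_nonneg_left (by linarith)
        (by nlinarith [mul_nonneg (show (0:ℝ) ≤ N / 2 - 1 by linarith) hy.le])
    have hNum2 : N * y / 16 ≤
        ((x + y) * Real.log (x + y) - (x + y)) -
          ((x + N * y) * Real.log (x + N * y) - (x + N * y)) := by
      linarith [e1, htan, hmono,
        mul_nonneg (show (0:ℝ) ≤ N / 16 - 1 / 4 by linarith) hy.le]
    have hMK : M * (y * (2 * Real.log (N + 1))) ≤ N * y / 16 := by
      have p1 : M * (y * (2 * Real.log (N + 1))) ≤ M * (y * (2 * (202 * M))) :=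
        mul_le_mul_of_nonneg_left
          (mul_le_mul_of_nonneg_left (by linarith) hy.le) hM0.le
      have hNy_eq : N * y = 10000 * M ^ 2 * y := by rw [hNdef]
      have p2 : 0 ≤ (M * M) * y := mul_nonneg (mul_nonneg hM0.le hM0.le) hy.le
      nlinarith [p1, p2, hNy_eq]
    have c1 := mul_le_mul_of_nonneg_left hDub1 hM0.le
    have c2 := mul_le_mul_of_nonneg_left
      (mul_le_mul_of_nonneg_left hA hy.le) hM0.le
    linarith [c1, c2, hMK, hNum2]
  · push_neg at hxbig
    by_cases hxy : x ≤ y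
    · -- tiny x: use superadditivity bound on the denominator
      have hlogy : Real.log y ≤ -Real.log (2 * N) := by
        have l1 : Real.log y ≤ Real.log (1 / (2 * N)) := Real.log_le_log hy hyN
        rwa [one_div, Real.log_inv] at l1
      have hstep : -(Real.log (N + 1) + Real.log y) ≤ -Real.log (x + N * y) := by
        have l1 : Real.log (x + N * y) ≤ Real.log ((N + 1) * y) :=
          Real.log_le_log hxNy0 (by nlinarith)
        rw [Real.log_mul (by linarith) hy.ne'] at l1
        linarith
      have hscal : M * (1 - Real.log y) ≤
          (N - 1) * (-(Real.log (N + 1) + Real.log y)) := by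
        have f1 := mul_le_mul_of_nonneg_left ha2 hM0.le
        have f2 : 0 ≤ (N - 1 - M) * (-Real.log (2 * N) - Real.log y) :=
          mul_nonneg (by nlinarith [hNdef, hM2, hM3]) (by linarith)
        have f3 := mul_le_mul_of_nonneg_left hgap (show (0:ℝ) ≤ N - 1 by linarith)
        linarith [f1, f2, f3, hM2, hM3, hNdef.le, hNdef.ge]
      have c1 := mul_le_mul_of_nonneg_left hDub2 hM0.le
      have c2 := mul_le_mul_of_nonneg_left hscal hy.le
      have c3 := mul_le_mul_of_nonneg_left hstep hNym
      linarith [c1, c2, c3, hNum1]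
    · -- y < x < exp(-K)
      push_neg at hxy
      have hx0 : 0 < x := hy.trans hxy
      have hA : 2 * Real.log (N + 1) ≤ -Real.log x := by
        have l := Real.log_lt_log hx0 hxbig
        rw [Real.log_exp] at l; linarith
      have hDub1 : (x * Real.log x - x) - ((x + y) * Real.log (x + y) - (x + y)) ≤
          y * (-Real.log x) := by
        have := tangent_upper x (x + y) hx0 (by linarith)
        nlinarith [this]
      have hstep : -(Real.log (N + 1) + Real.log x) ≤ -Real.log (x + N * y) := by
        have l1 : Real.log (x + N * y) ≤ Real.log ((N + 1) * x) := by
          refine Real.log_le_log hxNy0 ?_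
          nlinarith [mul_le_mul_of_nonneg_left hxy.le (show (0:ℝ) ≤ N by linarith)]
        rw [Real.log_mul (by linarith) hx0.ne'] at l1
        linarith
      have hscal : M * (-Real.log x) ≤
          (N - 1) * (-(Real.log (N + 1) + Real.log x)) := by
        have hAnn : 0 ≤ -Real.log x := by linarith
        have f1 : 0 ≤ (N - 1) * (-Real.log x / 2 - Real.log (N + 1)) :=
          mul_nonneg (by linarith) (by linarith)
        have f2 : 0 ≤ (N - 1 - 2 * M) * (-Real.log x) :=
          mul_nonneg (by nlinarith [hNdef, hM2, hM3]) hAnn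
        linarith [f1, f2]
      have c1 := mul_le_mul_of_nonneg_left hDub1 hM0.le
      have c2 := mul_le_mul_of_nonneg_left hscal hy.le
      have c3 := mul_le_mul_of_nonneg_left hstep hNym
      linarith [c1, c2, c3, hNum1]
end

section
/- For fixed 0 ≤ x ≤ 1/2 and C > 1, the function y ↦ F(x,y,C) = (h(x+y) − h(x+Cy))/(h(x) − h(x+y)) is nonincreasing in y for y > 0; in particular F(x,y,C) ≥ F(x, 1/(2C), C) for 0 < y ≤ 1/(2C). -/
/-!
Put `g(t) = h(x) - h(x + t)`, which is positive for `0 < t ≤ 1 - x` with `g' (t) = -log (x + t)`;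
then `F(x, y, C) = g(C y) / g(y) - 1`. For `C ≥ 1` the ratio `g(C y) / g(y)` decreases in `y`
as soon as the elasticity `ψ(t) = t g'(t) / g(t)` does, because the derivative of the ratio has
the sign of `ψ(C y) - ψ(y)`. With `u = x + t` and `D = log u - log x`, the numerator of `ψ'`,
multiplied by `u`, equals `-t (t - x D) + (log u) · x (u D - t)`, and both terms are `≤ 0`
by the tangent-line bounds `t / u ≤ D ≤ t / x`.
-/

open Real Set

lemma antitoneOn_Ioc_of_hasDerivAt_nonpos {f f' : ℝ → ℝ} {a b : ℝ}
    (hf : ∀ t ∈ Ioc a b, HasDerivAt f (f' t) t) (hf' : ∀ t ∈ Ioo a b, f' t ≤ 0) :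
    AntitoneOn f (Ioc a b) :=
  antitoneOn_of_hasDerivWithinAt_nonpos (convex_Ioc a b)
    (fun t ht ↦ (hf t ht).continuousAt.continuousWithinAt)
    (fun t ht ↦ by
      rw [interior_Ioc] at ht ⊢
      exact (hf t (Ioo_subset_Ioc_self ht)).hasDerivWithinAt)
    (fun t ht ↦ hf' t (by rwa [interior_Ioc] at ht))

/-- `hsign` says that the numerator of the derivative of `t g'(t) / g(t)` is nonpositive. -/
lemma antitoneOn_elasticity {g g' g'' : ℝ → ℝ} {b : ℝ}
    (hg : ∀ t ∈ Ioc 0 b, HasDerivAt g (g' t) t)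
    (hg' : ∀ t ∈ Ioc 0 b, HasDerivAt g' (g'' t) t)
    (hpos : ∀ t ∈ Ioc 0 b, 0 < g t)
    (hsign : ∀ t ∈ Ioo 0 b, (g' t + t * g'' t) * g t ≤ t * g' t ^ 2) :
    AntitoneOn (fun t ↦ t * g' t / g t) (Ioc 0 b) := by
  refine antitoneOn_Ioc_of_hasDerivAt_nonpos
    (f' := fun t ↦ ((g' t + t * g'' t) * g t - t * g' t * g' t) / g t ^ 2)
    (fun t ht ↦ ?_) (fun t ht ↦ ?_)
  · exact (((hasDerivAt_id' t).mul (hg' t ht)).div (hg t ht) (hpos t ht).ne').congr_deriv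
      (by simp only [Pi.mul_apply]; ring)
  · have := hsign t ht
    exact div_nonpos_of_nonpos_of_nonneg (by linarith) (sq_nonneg _)

lemma antitoneOn_div_comp_mul {g g' : ℝ → ℝ} {b C : ℝ} (hC : 1 ≤ C)
    (hg : ∀ t ∈ Ioc 0 b, HasDerivAt g (g' t) t) (hpos : ∀ t ∈ Ioc 0 b, 0 < g t)
    (helast : AntitoneOn (fun t ↦ t * g' t / g t) (Ioc 0 b)) :
    AntitoneOn (fun y ↦ g (C * y) / g y) (Ioc 0 (b / C)) := by
  have hC0 : 0 < C := by linarith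
  have hmem : ∀ y ∈ Ioc 0 (b / C), y ∈ Ioc 0 b ∧ C * y ∈ Ioc 0 b := by
    rintro y ⟨hy0, hyb⟩
    have hCy : C * y ≤ b := by rwa [le_div_iff₀ hC0, mul_comm] at hyb
    exact ⟨⟨hy0, by nlinarith⟩, ⟨mul_pos hC0 hy0, hCy⟩⟩
  refine antitoneOn_Ioc_of_hasDerivAt_nonpos
    (f' := fun y ↦ (C * g' (C * y) * g y - g (C * y) * g' y) / g y ^ 2)
    (fun y hy ↦ ?_) (fun y hy ↦ ?_)
  · obtain ⟨hy, hCy⟩ := hmem y hy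
    exact (((hg (C * y) hCy).comp y ((hasDerivAt_id' y).const_mul C)).div (hg y hy)
      (hpos y hy).ne').congr_deriv
      (by simp only [Function.comp_apply]; ring)
  · obtain ⟨hy, hCy⟩ := hmem y (Ioo_subset_Ioc_self hy)
    have hgy := hpos y hy
    have hgCy := hpos (C * y) hCy
    have hψ := helast hy hCy (by nlinarith [hy.1])
    rw [div_le_div_iff₀ hgCy hgy] at hψ
    have : C * g' (C * y) * g y ≤ g' y * g (C * y) := by
      refine le_of_mul_le_mul_left ?_ hy.1
      linarith
    exact div_nonpos_of_nonpos_of_nonneg (by linarith) (sq_nonneg _)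

lemma mul_log_sub_log_le_sub {a b : ℝ} (ha : 0 < a) (hb : 0 < b) :
    a * (log b - log a) ≤ b - a :=
  calc a * (log b - log a) = a * log (b / a) := by rw [log_div hb.ne' ha.ne']
    _ ≤ a * (b / a - 1) := mul_le_mul_of_nonneg_left (log_le_sub_one_of_pos (by positivity)) ha.le
    _ = b - a := by field_simp

/-- The function `h` of the statement. -/
noncomputable def negEntropy (t : ℝ) : ℝ := t * log t - t

noncomputable def entropyGap (x t : ℝ) : ℝ := negEntropy x - negEntropy (x + t)

lemma hasDerivAt_negEntropy {t : ℝ} (ht : t ≠ 0) : HasDerivAt negEntropy (log t) t :=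
  ((hasDerivAt_mul_log ht).sub (hasDerivAt_id t)).congr_deriv (by ring)

lemma negEntropy_strictAntiOn : StrictAntiOn negEntropy (Icc 0 1) := by
  refine strictAntiOn_of_deriv_neg (convex_Icc 0 1)
    (continuous_mul_log.sub continuous_id).continuousOn fun t ht ↦ ?_
  rw [interior_Icc] at ht
  rw [(hasDerivAt_negEntropy ht.1.ne').deriv]
  exact log_neg ht.1 ht.2

lemma entropyGap_pos {x t : ℝ} (hx : 0 ≤ x) (ht : 0 < t) (hxt : x + t ≤ 1) :
    0 < entropyGap x t :=
  sub_pos.2 <| negEntropy_strictAntiOn ⟨hx, by linarith⟩ ⟨by linarith, hxt⟩ (by linarith)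

lemma hasDerivAt_entropyGap {x t : ℝ} (h : x + t ≠ 0) :
    HasDerivAt (entropyGap x) (-log (x + t)) t :=
  (((hasDerivAt_negEntropy h).comp t ((hasDerivAt_id' t).const_add x)).const_sub
    (negEntropy x)).congr_deriv (by ring)

lemma hasDerivAt_neg_log_add {x t : ℝ} (h : x + t ≠ 0) :
    HasDerivAt (fun t ↦ -log (x + t)) (-(x + t)⁻¹) t :=
  (((hasDerivAt_log h).comp t ((hasDerivAt_id' t).const_add x)).neg).congr_deriv (by ring)

lemma entropyGap_elasticity_deriv_nonpos {x t : ℝ} (hx : 0 ≤ x) (ht : 0 < t)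
    (hxt : x + t ≤ 1) :
    (-log (x + t) + t * -(x + t)⁻¹) * entropyGap x t ≤ t * (-log (x + t)) ^ 2 := by
  set u := x + t
  have hu : 0 < u := by linarith
  have hL : log u ≤ 0 := log_nonpos hu.le hxt
  have hlower : 0 ≤ x * (u * (log u - log x) - t) := by
    rcases hx.eq_or_lt with rfl | hx
    · simp
    · have := mul_log_sub_log_le_sub hu hx
      exact mul_nonneg hx.le (by linarith)
  have hupper : x * (log u - log x) ≤ t := by
    rcases hx.eq_or_lt with rfl | hx
    · simpa using ht.le
    · linarith [mul_log_sub_log_le_sub hx hu]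
  have key : u * ((-log u + t * -u⁻¹) * entropyGap x t - t * (-log u) ^ 2) =
      -t * (t - x * (log u - log x)) + log u * (x * (u * (log u - log x) - t)) := by
    simp only [entropyGap, negEntropy]
    field_simp
    ring
  have : u * ((-log u + t * -u⁻¹) * entropyGap x t - t * (-log u) ^ 2) ≤ 0 := by
    rw [key]
    linarith [mul_nonneg ht.le (sub_nonneg.2 hupper), mul_nonpos_of_nonpos_of_nonneg hL hlower]
  linarith [nonpos_of_mul_nonpos_right this hu]

lemma entropyGap_elasticity_antitoneOn {x : ℝ} (hx : 0 ≤ x) :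
    AntitoneOn (fun t ↦ t * -log (x + t) / entropyGap x t) (Ioc 0 (1 - x)) := by
  have hne : ∀ t ∈ Ioc 0 (1 - x), x + t ≠ 0 := fun t ht ↦ by linarith [ht.1]
  exact antitoneOn_elasticity (fun t ht ↦ hasDerivAt_entropyGap (hne t ht))
    (fun t ht ↦ hasDerivAt_neg_log_add (hne t ht))
    (fun t ht ↦ entropyGap_pos hx ht.1 (by linarith [ht.2]))
    (fun t ht ↦ entropyGap_elasticity_deriv_nonpos hx ht.1 (by linarith [ht.2]))

lemma entropyGap_ratio_antitoneOn {x C : ℝ} (hx : 0 ≤ x) (hC : 1 ≤ C) :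
    AntitoneOn (fun y ↦ entropyGap x (C * y) / entropyGap x y) (Ioc 0 ((1 - x) / C)) :=
  antitoneOn_div_comp_mul hC (fun t ht ↦ hasDerivAt_entropyGap (by linarith [ht.1]))
    (fun t ht ↦ entropyGap_pos hx ht.1 (by linarith [ht.2]))
    (entropyGap_elasticity_antitoneOn hx)

/-- For fixed `0 ≤ x ≤ 1/2` and `C > 1`, the quotient
`F(x,y,C) = (h(x+y) - h(x+Cy)) / (h(x) - h(x+y))` is nonincreasing in `y` on
`(0, 1/(2C)]`; in particular `F(x,y,C) ≥ F(x, 1/(2C), C)` there. -/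
theorem quotient_antitone_in_y (x C : ℝ) (hx0 : 0 ≤ x) (hx : x ≤ 1 / 2) (hC : 1 < C) :
    (∀ y₁ y₂ : ℝ, 0 < y₁ → y₁ ≤ y₂ → y₂ ≤ 1 / (2 * C) →
      (((x + y₂) * Real.log (x + y₂) - (x + y₂)) -
          ((x + C * y₂) * Real.log (x + C * y₂) - (x + C * y₂))) /
        ((x * Real.log x - x) - ((x + y₂) * Real.log (x + y₂) - (x + y₂))) ≤
      (((x + y₁) * Real.log (x + y₁) - (x + y₁)) -
          ((x + C * y₁) * Real.log (x + C * y₁) - (x + C * y₁))) /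
        ((x * Real.log x - x) - ((x + y₁) * Real.log (x + y₁) - (x + y₁)))) ∧
    (∀ y : ℝ, 0 < y → y ≤ 1 / (2 * C) →
      (((x + 1 / (2 * C)) * Real.log (x + 1 / (2 * C)) - (x + 1 / (2 * C))) -
          ((x + 1 / 2) * Real.log (x + 1 / 2) - (x + 1 / 2))) /
        ((x * Real.log x - x) -
          ((x + 1 / (2 * C)) * Real.log (x + 1 / (2 * C)) - (x + 1 / (2 * C)))) ≤
      (((x + y) * Real.log (x + y) - (x + y)) -
          ((x + C * y) * Real.log (x + C * y) - (x + C * y))) /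
        ((x * Real.log x - x) - ((x + y) * Real.log (x + y) - (x + y)))) := by
  have hC0 : 0 < C := by linarith
  have hrange : 1 / (2 * C) ≤ (1 - x) / C := by
    rw [div_le_div_iff₀ (by positivity) hC0]
    nlinarith
  have hF : ∀ y,
      (((x + y) * log (x + y) - (x + y)) - ((x + C * y) * log (x + C * y) - (x + C * y))) /
        ((x * log x - x) - ((x + y) * log (x + y) - (x + y))) =
      (entropyGap x (C * y) - entropyGap x y) / entropyGap x y := fun y ↦ by
    simp only [entropyGap, negEntropy]
    congr 1
    ring
  have hgap : ∀ y, 0 < y → y ≤ 1 / (2 * C) → entropyGap x y ≠ 0 := fun y hy hy' ↦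
    have : (1 - x) / C ≤ 1 - x := div_le_self (by linarith) hC.le
    (entropyGap_pos hx0 hy (by linarith [hy'.trans hrange])).ne'
  have hmono : ∀ y₁ y₂ : ℝ, 0 < y₁ → y₁ ≤ y₂ → y₂ ≤ 1 / (2 * C) →
      (entropyGap x (C * y₂) - entropyGap x y₂) / entropyGap x y₂ ≤
        (entropyGap x (C * y₁) - entropyGap x y₁) / entropyGap x y₁ := by
    intro y₁ y₂ h1 h12 h2
    rw [sub_div, sub_div, div_self (hgap y₁ h1 (h12.trans h2)),
      div_self (hgap y₂ (h1.trans_le h12) h2)]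
    exact sub_le_sub_right (entropyGap_ratio_antitoneOn hx0 hC.le
      ⟨h1, (h12.trans h2).trans hrange⟩ ⟨h1.trans_le h12, h2.trans hrange⟩ h12) 1
  refine ⟨fun y₁ y₂ h1 h12 h2 ↦ ?_, fun y hy hy2 ↦ ?_⟩
  · rw [hF, hF]
    exact hmono y₁ y₂ h1 h12 h2
  · rw [show (1 : ℝ) / 2 = C * (1 / (2 * C)) by field_simp, hF, hF]
    exact hmono y _ hy hy2 le_rfl
end

section
/- For C > 1 define G(x,C) = (h(x + 1/(2C)) − h(x + 1/2))/(h(x) − h(x + 1/(2C))). Then G(0,C) = C(1+log 2)/(log(2C)+1) − 1 ≥ ((1+log 2)/2)√C − 1. -/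
/-!
With `h(t) = t log t - t` one has `h(1/x) = -(log x + 1)/x` and `h(0) = 0`, so the value of
`G(0, C)` is a direct computation. The bound reduces to `log (2C) + 1 ≤ 2√C`, which follows
from `log √C ≤ √C - 1` and `log 2 ≤ 1`.
-/

open Real

theorem inv_mul_log_inv_sub_inv (x : ℝ) : x⁻¹ * log x⁻¹ - x⁻¹ = -(log x + 1) / x := by
  rw [log_inv]; ring

theorem log_le_two_mul_sqrt_sub_one {x : ℝ} (hx : 0 < x) : log x ≤ 2 * (√x - 1) := by
  have h := log_le_sub_one_of_pos (sqrt_pos.mpr hx)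
  rw [log_sqrt hx.le] at h
  linarith

theorem log_two_mul_add_one_le_two_mul_sqrt {x : ℝ} (hx : 0 < x) :
    log (2 * x) + 1 ≤ 2 * √x := by
  have h2 : log 2 ≤ 1 := by linarith [log_le_sub_one_of_pos two_pos]
  rw [log_mul two_ne_zero hx.ne']
  linarith [log_le_two_mul_sqrt_sub_one hx]

theorem sqrt_div_two_le_div_log_two_mul_add_one {x : ℝ} (hx : 1 / 2 ≤ x) :
    √x / 2 ≤ x / (log (2 * x) + 1) := by
  have hx0 : 0 < x := by linarith
  have hL : 0 < log (2 * x) + 1 := by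
    linarith [log_nonneg (show (1 : ℝ) ≤ 2 * x by linarith)]
  calc √x / 2 = x / (2 * √x) := by
        field_simp
        rw [sq_sqrt hx0.le]
    _ ≤ x / (log (2 * x) + 1) :=
        div_le_div_of_nonneg_left hx0.le hL (log_two_mul_add_one_le_two_mul_sqrt hx0)

/-- Value and lower bound of `G(0, C)` where
`G(x,C) = (h(x+1/(2C)) - h(x+1/2)) / (h(x) - h(x+1/(2C)))`, `h(t) = t log t - t`. -/
theorem G_zero_value_and_bound (C : ℝ) (hC : 1 < C) :
    ((1 / (2 * C)) * Real.log (1 / (2 * C)) - 1 / (2 * C) -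
        ((1 / 2) * Real.log (1 / 2) - 1 / 2)) /
      ((0 : ℝ) * Real.log 0 - 0 -
        ((1 / (2 * C)) * Real.log (1 / (2 * C)) - 1 / (2 * C))) =
      C * (1 + Real.log 2) / (Real.log (2 * C) + 1) - 1 ∧
    (1 + Real.log 2) / 2 * Real.sqrt C - 1 ≤
      C * (1 + Real.log 2) / (Real.log (2 * C) + 1) - 1 := by
  constructor
  · have hC0 : C ≠ 0 := by positivity
    have hL : Real.log (2 * C) + 1 ≠ 0 := by
      linarith [Real.log_nonneg (show (1 : ℝ) ≤ 2 * C by linarith)]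
    simp only [one_div]
    rw [inv_mul_log_inv_sub_inv, inv_mul_log_inv_sub_inv]
    simp only [zero_mul, sub_zero, zero_sub, neg_div, neg_neg]
    field_simp
    ring
  · calc (1 + Real.log 2) / 2 * Real.sqrt C - 1 = (1 + Real.log 2) * (√C / 2) - 1 := by ring
      _ ≤ (1 + Real.log 2) * (C / (Real.log (2 * C) + 1)) - 1 := by
        have hbound := sqrt_div_two_le_div_log_two_mul_add_one (show 1 / 2 ≤ C by linarith)
        gcongr
      _ = C * (1 + Real.log 2) / (Real.log (2 * C) + 1) - 1 := by ring
end

section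
/- For C > 1, the function G₁(½, C) = (C + log 2) log(1 + 1/C) − log 2 (1 + log 2) satisfies G₁(½, C) ≤ 0. -/
open Real Set

/-- For `y ≥ 1`, `log y ≤ (y - y⁻¹)/2`. -/
lemma log_le_half_sub_inv_aux {y : ℝ} (hy : 1 ≤ y) : Real.log y ≤ (y - y⁻¹) / 2 := by
  have key : MonotoneOn (fun y : ℝ => (y - y⁻¹) / 2 - Real.log y) (Ici 1) := by
    have hderiv : ∀ x : ℝ, 0 < x →
        HasDerivAt (fun y : ℝ => (y - y⁻¹) / 2 - Real.log y)
          ((1 - -(x ^ 2)⁻¹) / 2 - x⁻¹) x := fun x hx0 =>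
      (((hasDerivAt_id x).sub (hasDerivAt_inv hx0.ne')).div_const 2).sub
        (Real.hasDerivAt_log hx0.ne')
    apply monotoneOn_of_deriv_nonneg (convex_Ici 1)
    · apply ContinuousOn.sub
      · apply ContinuousOn.div_const
        apply continuousOn_id.sub
        exact continuousOn_id.inv₀ fun x hx =>
          ne_of_gt (lt_of_lt_of_le one_pos (mem_Ici.mp hx))
      · exact Real.continuousOn_log.mono fun x hx => by
          simp only [mem_Ici] at hx
          simp only [mem_compl_iff, mem_singleton_iff]
          intro h; rw [h] at hx; linarith
    · intro x hx
      rw [interior_Ici] at hx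
      have hx0 : (0:ℝ) < x := lt_trans one_pos hx
      exact (hderiv x hx0).differentiableAt.differentiableWithinAt
    · intro x hx
      rw [interior_Ici] at hx
      have hx0 : (0:ℝ) < x := lt_trans one_pos hx
      rw [(hderiv x hx0).deriv]
      have heq : (1 - -(x ^ 2)⁻¹) / 2 - x⁻¹ = (x - 1) ^ 2 / (2 * x ^ 2) := by
        field_simp; ring
      rw [heq]; positivity
  have h0 := key self_mem_Ici (mem_Ici.mpr hy) hy
  simp only [Real.log_one, inv_one, sub_self, zero_div, zero_sub] at h0
  linarith

/-- For `C > 1`, `G₁(1/2, C) = (C + log 2) log (1 + 1/C) - log 2 (1 + log 2) ≤ 0`. -/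
theorem G1_half_nonpos (C : ℝ) (hC : 1 < C) :
    (C + Real.log 2) * Real.log (1 + 1 / C) - Real.log 2 * (1 + Real.log 2) ≤ 0 := by
  have hC0 : (0:ℝ) < C := lt_trans one_pos hC
  have hL2 : (1/2 : ℝ) < Real.log 2 := by linarith [Real.log_two_gt_d9]
  set f : ℝ → ℝ := fun x => (x + Real.log 2) * (Real.log (x + 1) - Real.log x) with hf
  have key : AntitoneOn f (Ici 1) := by
    have hderiv : ∀ x : ℝ, 0 < x →
        HasDerivAt f
          (1 * (Real.log (x + 1) - Real.log x)
            + (x + Real.log 2) * ((x + 1)⁻¹ * 1 - x⁻¹ * 1)) x := by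
      intro x hx0
      have h1 : HasDerivAt (fun y : ℝ => Real.log (y + 1)) ((x + 1)⁻¹ * 1) x := by
        have := ((hasDerivAt_id x).add_const 1).log (by positivity)
        simpa [div_eq_inv_mul] using this
      have h2 : HasDerivAt (fun y : ℝ => Real.log y) (x⁻¹ * 1) x := by
        simpa using Real.hasDerivAt_log hx0.ne'
      exact ((hasDerivAt_id x).add_const (Real.log 2)).mul (h1.sub h2)
    apply antitoneOn_of_deriv_nonpos (convex_Ici 1)
    · apply ContinuousOn.mul
      · fun_prop
      · apply ContinuousOn.sub
        · apply Real.continuousOn_log.comp (by fun_prop)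
          intro x hx
          simp only [mem_Ici] at hx
          simp only [mem_compl_iff, mem_singleton_iff]
          intro h; linarith
        · exact Real.continuousOn_log.mono fun x hx => by
            simp only [mem_Ici] at hx
            simp only [mem_compl_iff, mem_singleton_iff]
            intro h; rw [h] at hx; linarith
    · intro x hx
      rw [interior_Ici] at hx
      exact (hderiv x (lt_trans one_pos hx)).differentiableAt.differentiableWithinAt
    · intro x hx
      rw [interior_Ici] at hx
      have hx0 : (0:ℝ) < x := lt_trans one_pos hx
      have hx1 : (0:ℝ) < x + 1 := by linarith
      rw [(hderiv x hx0).deriv]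
      have hlog : Real.log (x + 1) - Real.log x ≤ (2 * x + 1) / (2 * x * (x + 1)) := by
        have h := log_le_half_sub_inv_aux (y := (x + 1) / x)
          (by rw [le_div_iff₀ hx0]; linarith)
        rw [Real.log_div hx1.ne' hx0.ne'] at h
        have hinv : ((x + 1) / x)⁻¹ = x / (x + 1) := by
          rw [inv_div]
        rw [hinv] at h
        have heq : ((x + 1) / x - x / (x + 1)) / 2 = (2 * x + 1) / (2 * x * (x + 1)) := by
          field_simp; ring
        linarith [heq ▸ h]
      have hterm : (x + Real.log 2) * ((x + 1)⁻¹ * 1 - x⁻¹ * 1)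
          = -((x + Real.log 2) / (x * (x + 1))) := by
        have h1 : (x + 1)⁻¹ * 1 - x⁻¹ * 1 = -(1 / (x * (x + 1))) := by
          field_simp; ring
        rw [h1, div_eq_mul_inv]; ring
      rw [hterm]
      have hfin : (2 * x + 1) / (2 * x * (x + 1)) - (x + Real.log 2) / (x * (x + 1)) ≤ 0 := by
        rw [sub_nonpos, div_le_div_iff₀ (by positivity) (by positivity)]
        nlinarith [mul_pos hx0 hx1, hL2]
      nlinarith [hlog, hfin]
  have h1 : f C ≤ f 1 := key (self_mem_Ici) (mem_Ici.mpr hC.le) hC.le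
  have hf1 : f 1 = Real.log 2 * (1 + Real.log 2) := by
    simp only [hf]
    rw [Real.log_one]
    norm_num
    ring
  have hrw : Real.log (1 + 1 / C) = Real.log (C + 1) - Real.log C := by
    rw [show (1 + 1 / C : ℝ) = (C + 1) / C by field_simp]
    exact Real.log_div (by positivity) hC0.ne'
  rw [hrw]
  have := hf1 ▸ h1
  simp only [hf] at this
  linarith
end

section
/- Suppose a scheme is conservative and the entropy fix uses β ∈ (0,1] with η(f^{n+1} + β(1 − f^{n+1})) = η(f(t_{n+1})), where ‖f^{n+1}‖₁ = ‖f(t_{n+1})‖₁ = V, η(f^{n+1}) > η(f(t_{n+1})), ‖f^{n+1} − f(t_{n+1})‖_∞ ≤ 1/3. Then ‖β(1 − f^{n+1})‖₂ ≤ M ‖f^{n+1} − f(t_{n+1})‖_∞, where M depends only on V, ‖f^{n+1}‖_∞ and ‖f(t_{n+1})‖_∞. -/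
open Real Finset

lemma phi_grad {z y : ℝ} (hz : 0 < z) (hy : 0 ≤ y) :
    z * Real.log z + (Real.log z + 1) * (y - z) ≤ y * Real.log y := by
  rcases hy.eq_or_lt with h | h
  · rw [← h]; simp; nlinarith [hz]
  · have h1 : 1 - z / y ≤ Real.log (y / z) := by
      have := Real.one_sub_inv_le_log_of_pos (div_pos h hz)
      rwa [inv_div] at this
    have h2 : Real.log (y / z) = Real.log y - Real.log z := Real.log_div h.ne' hz.ne'
    rw [h2] at h1
    have h4 : y * (1 - z / y) ≤ y * (Real.log y - Real.log z) :=
      mul_le_mul_of_nonneg_left h1 h.le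
    have h3 : y * (1 - z / y) = y - z := by field_simp
    nlinarith [h4]

/-- |log f| ≤ 2|1-f| for f ≥ 1/2 -/
lemma abs_log_le {f : ℝ} (hf : 1/2 ≤ f) : |Real.log f| ≤ 2 * |1 - f| := by
  have hf0 : (0:ℝ) < f := by linarith
  rcases le_or_gt f 1 with h | h
  · rw [abs_of_nonpos (Real.log_nonpos (by linarith) h), abs_of_nonneg (by linarith : (0:ℝ) ≤ 1 - f)]
    have h1 : 1 - f⁻¹ ≤ Real.log f := Real.one_sub_inv_le_log_of_pos hf0
    have key : f⁻¹ ≤ 3 - 2*f := by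
      rw [inv_eq_one_div, div_le_iff₀ hf0]; nlinarith
    linarith
  · rw [abs_of_nonneg (Real.log_nonneg h.le), abs_of_nonpos (by linarith : 1 - f ≤ 0)]
    have := Real.log_le_sub_one_of_pos hf0
    linarith
lemma psi_anti {x y : ℝ} (hx : 0 ≤ x) (hxy : x ≤ y) (hy1 : y ≤ 1) :
    y * Real.log y - y ≤ x * Real.log x - x := by
  rcases (hx.trans hxy).eq_or_lt with h | hy0
  · have hx0 : x = 0 := le_antisymm (h ▸ hxy) hx
    rw [← h, hx0]
  · have h1 := phi_grad hy0 hx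
    have h2 : Real.log y ≤ 0 := Real.log_nonpos (by linarith) hy1
    nlinarith [mul_nonneg (neg_nonneg.mpr h2) (sub_nonneg.mpr hxy)]

/-- F8 per-cell: (1-β)(1-f)²/A ≤ (1-f) * (-log((1-β)f+β)) -/
lemma Dcell {f β A : ℝ} (hf0 : 0 ≤ f) (hfA : f ≤ A) (hA : 1 ≤ A)
    (hβ0 : 0 < β) (hβ1 : β ≤ 1) :
    (1-β) * (1-f)^2 / A ≤ (1-f) * (-Real.log ((1-β)*f + β)) := by
  have hA0 : (0:ℝ) < A := by linarith
  set z := (1-β)*f + β with hz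
  have hz0 : 0 < z := by nlinarith
  rcases le_or_gt f 1 with h | h
  · -- f ≤ 1 : log z ≤ z - 1 = -(1-β)(1-f)
    have h1 : Real.log z ≤ z - 1 := Real.log_le_sub_one_of_pos hz0
    have h2 : z - 1 = -((1-β)*(1-f)) := by ring
    have h3 : (1-f) * Real.log z ≤ (1-f) * (-((1-β)*(1-f))) := by
      apply mul_le_mul_of_nonneg_left (h1.trans_eq h2) (by linarith)
    have h4 : (1-β)*(1-f)^2/A ≤ (1-β)*(1-f)^2 := by
      rw [div_le_iff₀ hA0]
      nlinarith [mul_nonneg (mul_nonneg (by linarith : (0:ℝ) ≤ 1-β) (sq_nonneg (1-f))) (by linarith : (0:ℝ) ≤ A - 1)]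
    nlinarith
  · -- f > 1 : log z ≥ (z-1)/z ≥ (z-1)/A
    have hz1 : 1 ≤ z := by nlinarith
    have hzA : z ≤ A := by nlinarith
    have h1 : 1 - z⁻¹ ≤ Real.log z := Real.one_sub_inv_le_log_of_pos hz0
    have h2 : (z-1)/A ≤ 1 - z⁻¹ := by
      rw [div_le_iff₀ hA0, inv_eq_one_div]
      have : (1 - 1/z) * A = A - A/z := by ring
      rw [this]
      have h5 : z - 1 ≤ A*(z-1)/z := by
        rw [le_div_iff₀ hz0]
        nlinarith
      have h6 : A*(z-1)/z = A - A/z := by field_simp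
      linarith [h5.trans_eq h6]
    have h3 : (z-1)/A ≤ Real.log z := h2.trans h1
    have h7 : (1-f) * Real.log z ≤ (1-f) * ((z-1)/A) := by
      apply mul_le_mul_of_nonpos_left h3 (by linarith)
    have h8 : (1-f) * ((z-1)/A) = -((1-β)*(1-f)^2/A) := by
      field_simp; ring
    nlinarith

-- reuse abs_log_le from aux1 (inline here for test)
lemma F9cell {f β : ℝ} (hf0 : 0 ≤ f) (hβ0 : 0 < β) (hβ1 : β ≤ 1) :
    |Real.log ((1-β)*f + β)| ≤ 2*(1-β)*|1-f| + 2*(1-β)*(1-f)^2/β := by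
  set z := (1-β)*f + β with hz
  have hz0 : 0 < z := by nlinarith
  have hzβ : β ≤ z := by nlinarith
  rcases le_or_gt (1/2 : ℝ) f with h | h
  · -- f ≥ 1/2 : |log z| ≤ 2|1-z| = 2(1-β)|1-f|
    have hz2 : (1/2:ℝ) ≤ z := by nlinarith
    have h1 := abs_log_le hz2
    have h2 : |1 - z| = (1-β) * |1-f| := by
      have : 1 - z = (1-β)*(1-f) := by rw [hz]; ring
      rw [this, abs_mul, abs_of_nonneg (by linarith : (0:ℝ) ≤ 1-β)]
    have h3 : 0 ≤ 2*(1-β)*(1-f)^2/β :=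
      div_nonneg (by nlinarith [sq_nonneg (1-f)]) hβ0.le
    calc |Real.log z| ≤ 2*|1-z| := h1
      _ = 2*(1-β)*|1-f| := by rw [h2]; ring
      _ ≤ _ := by linarith
  · -- f < 1/2 : u := 1-f > 1/2, z ≤ 1,  -log z ≤ (1-z)/z ≤ (1-β)u/β ≤ 2(1-β)u²/β
    have hu : 1/2 < 1 - f := by linarith
    have hz1 : z ≤ 1 := by nlinarith
    have h1 : 1 - z⁻¹ ≤ Real.log z := Real.one_sub_inv_le_log_of_pos hz0
    have habs : |Real.log z| = -(Real.log z) := abs_of_nonpos (Real.log_nonpos hz0.le hz1)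
    -- -log z ≤ z⁻¹ - 1 = (1-z)/z ≤ (1-z)/β
    have h2 : z⁻¹ - 1 = (1-z)/z := by field_simp
    have h3 : (1-z)/z ≤ (1-z)/β := by
      exact div_le_div_of_nonneg_left (by nlinarith) hβ0 hzβ
    have h4 : 1 - z = (1-β)*(1-f) := by rw [hz]; ring
    have h5 : (1-β)*(1-f) ≤ 2*(1-β)*(1-f)^2 := by nlinarith
    have h6 : (1-z)/β ≤ 2*(1-β)*(1-f)^2/β :=
      div_le_div_of_nonneg_right (by rw [h4]; exact h5) hβ0.le
    have h7 : 0 ≤ 2*(1-β)*|1-f| := by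
      have := abs_nonneg (1-f); nlinarith
    rw [habs]
    have : -Real.log z ≤ (1-z)/β := by
      calc -Real.log z ≤ z⁻¹ - 1 := by linarith
        _ = (1-z)/z := h2
        _ ≤ (1-z)/β := h3
    linarith [this.trans h6]
lemma goodcell {f g δ : ℝ} (hf : 1/2 ≤ f) (hg : 0 ≤ g) (he : |f - g| ≤ δ) :
    f * Real.log f - g * Real.log g - (f - g) ≤ 2 * δ * |1 - f| := by
  have hf0 : (0:ℝ) < f := by linarith
  have h1 := phi_grad hf0 hg   -- g log g ≥ f log f + (log f + 1)(g - f)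
  -- so LHS ≤ (log f)(f - g)
  have h2 : Real.log f * (f - g) ≤ |Real.log f| * |f - g| := by
    calc Real.log f * (f - g) ≤ |Real.log f * (f - g)| := le_abs_self _
      _ = |Real.log f| * |f - g| := abs_mul _ _
  have h3 : |Real.log f| * |f - g| ≤ (2 * |1 - f|) * δ :=
    mul_le_mul (abs_log_le hf) he (abs_nonneg _) (by positivity)
  nlinarith [h1]

/-- bad cell entropy estimate -/
lemma badcell_eta {f g δ β A : ℝ} (hf0 : 0 ≤ f) (hf : f < 1/2) (hg : 0 ≤ g)
    (he : |f - g| ≤ δ) (hδ0 : 0 < δ) (hδ : δ ≤ 1/3) (hβ0 : 0 < β)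
    (hA : 1 ≤ A) (hB : (f+β)^2 ≤ 8*A*(f+δ)) (hfb : f + β ≤ 3/4) :
    f * Real.log f - g * Real.log g - (f - g)
      ≤ δ * (1 + Real.log (8*A) + 2 * (-Real.log (f+β))) := by
  have hfβ0 : 0 < f + β := by linarith
  have hlogfb : Real.log (f+β) ≤ 0 := Real.log_nonpos hfβ0.le (by linarith)
  have hlog8A : 0 ≤ Real.log (8*A) := Real.log_nonneg (by linarith)
  rcases le_or_gt g f with h | h
  · -- ψ f ≤ ψ g  since g ≤ f ≤ 1/2 ≤ 1
    have := psi_anti hg h (by linarith : f ≤ 1)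
    nlinarith
  · -- f < g ≤ f + δ =: t ≤ 5/6
    have hgt : g ≤ f + δ := by
      have := abs_le.mp he; linarith [this.1]
    set t := f + δ with ht
    have ht1 : t ≤ 1 := by simp [ht]; linarith
    have ht0 : 0 < t := by simp [ht]; linarith
    -- ψ g ≥ ψ t
    have h1 : t * Real.log t - t ≤ g * Real.log g - g := psi_anti hg hgt ht1
    -- ψ f - ψ t ≤ δ (1 - log t):  f log f ≤ f log t = (t - δ) log t
    have h2 : f * Real.log f ≤ f * Real.log t := by
      rcases hf0.eq_or_lt with h0 | h0
      · rw [← h0]; simp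
      · exact mul_le_mul_of_nonneg_left (Real.log_le_log h0 (by simp [ht]; linarith)) hf0
    -- -log t ≤ log(8A) + 2(-log(f+β))
    have h3 : Real.log ((f+β)^2) ≤ Real.log (8*A*t) := by
      apply Real.log_le_log (by positivity) hB
    have h4 : Real.log ((f+β)^2) = 2 * Real.log (f+β) := by
      rw [sq, Real.log_mul hfβ0.ne' hfβ0.ne']; ring
    have h5 : Real.log (8*A*t) = Real.log (8*A) + Real.log t := by
      rw [Real.log_mul (by positivity) ht0.ne']
    have h6 : -Real.log t ≤ Real.log (8*A) + 2*(-Real.log (f+β)) := by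
      rw [h4, h5] at h3; linarith
    -- combine
    have h7 : f * Real.log f - t * Real.log t ≤ -δ * Real.log t := by
      have : f * Real.log t - t * Real.log t = -δ * Real.log t := by rw [ht]; ring
      linarith
    have hδlog : δ * (-Real.log t) ≤ δ * (Real.log (8*A) + 2*(-Real.log (f+β))) :=
      mul_le_mul_of_nonneg_left h6 hδ0.le
    nlinarith

/-- bad cell contribution to D -/
lemma badcell_D {f β : ℝ} (hf0 : 0 ≤ f) (hf : f < 1/2) (hβ0 : 0 < β) (hβ : β ≤ 1/4) :
    (1/2) * (-Real.log (f + β)) ≤ (1 - f) * (-Real.log ((1-β)*f + β)) := by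
  have hz0 : 0 < (1-β)*f + β := by nlinarith
  have hzle : (1-β)*f + β ≤ f + β := by nlinarith
  have h1 : Real.log ((1-β)*f + β) ≤ Real.log (f + β) := Real.log_le_log hz0 hzle
  have h2 : Real.log (f + β) ≤ 0 := Real.log_nonpos (by linarith) (by linarith)
  have h3 : (0:ℝ) ≤ -Real.log (f+β) := by linarith
  have h4 : -Real.log (f+β) ≤ -Real.log ((1-β)*f + β) := by linarith
  have h5 : (1/2 : ℝ) ≤ 1 - f := by linarith
  nlinarith

/-- ψ(x) ≥ (√x - 1)² -/
lemma psi_sqrt {x : ℝ} (hx : 0 ≤ x) :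
    (Real.sqrt x - 1)^2 ≤ x * Real.log x - x + 1 := by
  rcases hx.eq_or_lt with h | h
  · rw [← h]; simp
  · have hs0 : 0 < Real.sqrt x := Real.sqrt_pos.mpr h
    have h1 : 1 - (Real.sqrt x)⁻¹ ≤ Real.log (Real.sqrt x) := Real.one_sub_inv_le_log_of_pos hs0
    have h2 : Real.log (Real.sqrt x) = Real.log x / 2 := Real.log_sqrt hx
    have hss : Real.sqrt x * Real.sqrt x = x := Real.mul_self_sqrt hx
    have h3 : x * (1 - (Real.sqrt x)⁻¹) ≤ x * (Real.log x / 2) :=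
      mul_le_mul_of_nonneg_left (h2 ▸ h1) hx
    have h4 : x * (Real.sqrt x)⁻¹ = Real.sqrt x := by
      rw [inv_eq_one_div, mul_one_div, eq_comm, eq_comm, div_eq_iff hs0.ne']
      nlinarith [hss]
    nlinarith [h3, h4, hss]

/-- φ(g) ≥ g - 1 -/
lemma phi_lb {g : ℝ} (hg : 0 ≤ g) : g - 1 ≤ g * Real.log g := by
  rcases hg.eq_or_lt with h | h
  · rw [← h]; norm_num
  · have h1 : 1 - g⁻¹ ≤ Real.log g := Real.one_sub_inv_le_log_of_pos h
    have h2 : g * (1 - g⁻¹) ≤ g * Real.log g := mul_le_mul_of_nonneg_left h1 h.le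
    have h3 : g * (1 - g⁻¹) = g - 1 := by field_simp
    linarith


noncomputable def Mbig (v F G : ℝ) : ℝ :=
  64 * max F 1 * ((1 + max F 1) * Real.sqrt v)
  + (1 + max F 1) * Real.sqrt v
  + 4 * max F 1 * Real.sqrt v + Real.sqrt v
  + (16 * max F 1 / 3) * Real.sqrt v
  + 4 * ((1 + Real.log (8 * max F 1)) / Real.log (4/3) + 2) * ((1 + max F 1) * Real.sqrt v)

set_option maxHeartbeats 2000000 in
/-- Theorem 2.3: the entropy fix is controlled by the L∞ error, with a constant
depending only on the volume `V = ∑ Δv`, `‖f‖_∞` and `‖g‖_∞`. -/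
theorem entropy_fix_Linf_bound :
    ∃ M : ℝ → ℝ → ℝ → ℝ,
      ∀ (N : ℕ), 0 < N →
      ∀ (Δv f g : Fin N → ℝ) (β : ℝ),
        (∀ i, 0 < Δv i) → (∀ i, 0 ≤ f i) → (∀ i, 0 ≤ g i) →
        (∑ i, f i * Δv i) = (∑ i, Δv i) →
        (∑ i, g i * Δv i) = (∑ i, Δv i) →
        (∑ i, g i * Real.log (g i) * Δv i) < (∑ i, f i * Real.log (f i) * Δv i) →
        (⨆ i, |f i - g i|) ≤ 1 / 3 →
        0 < β → β ≤ 1 →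
        (∑ i, (f i + β * (1 - f i)) * Real.log (f i + β * (1 - f i)) * Δv i) =
          (∑ i, g i * Real.log (g i) * Δv i) →
        Real.sqrt (∑ i, (β * (1 - f i)) ^ 2 * Δv i) ≤
          M (∑ i, Δv i) (⨆ i, f i) (⨆ i, g i) * (⨆ i, |f i - g i|) := by
  classical
  refine ⟨Mbig, ?_⟩
  intro N hN Δv f g β hΔv hf0 hg0 hmf hmg hent hδ3 hβ0 hβ1 hfix
  set V := ∑ i, Δv i with hVdef
  set δ := ⨆ i, |f i - g i| with hδdef
  set sf := ⨆ i, f i with hsfdef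
  set A := max sf 1 with hAdef
  set sV := Real.sqrt V with hsVdef
  set R := (1 + A) * sV with hRdef
  set C8 := (1 + Real.log (8 * A)) / Real.log (4/3) + 2 with hC8def
  clear_value V δ sf A sV R C8
  have i0 : Fin N := ⟨0, hN⟩
  have hVpos : 0 < V := by
    rw [hVdef]; exact Finset.sum_pos (fun i _ => hΔv i) ⟨i0, mem_univ i0⟩
  have hA1 : (1:ℝ) ≤ A := by rw [hAdef]; exact le_max_right _ _
  have hApos : (0:ℝ) < A := by linarith
  have hfA : ∀ i, f i ≤ A := by
    intro i
    have h1 : f i ≤ sf := by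
      rw [hsfdef]; exact le_ciSup (Finite.bddAbove_range f) i
    have h2 : sf ≤ A := by rw [hAdef]; exact le_max_left _ _
    linarith
  have hei : ∀ i, |f i - g i| ≤ δ := by
    intro i
    rw [hδdef]
    exact le_ciSup (Finite.bddAbove_range fun j => |f j - g j|) i
  have hδnn : 0 ≤ δ := le_trans (abs_nonneg _) (hei i0)
  have hδpos : 0 < δ := by
    rcases hδnn.eq_or_lt with h | h
    · exfalso
      have hfg : f = g := by
        funext i
        have h1 : |f i - g i| ≤ 0 := by rw [h]; exact hei i
        have h2 : |f i - g i| = 0 := le_antisymm h1 (abs_nonneg _)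
        exact sub_eq_zero.mp (abs_eq_zero.mp h2)
      rw [hfg] at hent; exact lt_irrefl _ hent
    · exact h
  set Q := ∑ i, (1 - f i)^2 * Δv i with hQdef
  clear_value Q
  have hQ0 : 0 ≤ Q := by
    rw [hQdef]
    exact Finset.sum_nonneg fun i _ => mul_nonneg (sq_nonneg _) (hΔv i).le
  have hQcap : Q ≤ (1+A)^2 * V := by
    rw [hQdef, hVdef]
    calc (∑ i, (1 - f i)^2 * Δv i) ≤ ∑ i, (1+A)^2 * Δv i := by
          apply Finset.sum_le_sum
          intro i _
          apply mul_le_mul_of_nonneg_right ?_ (hΔv i).le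
          nlinarith [hf0 i, hfA i, hA1]
      _ = (1+A)^2 * ∑ i, Δv i := by rw [← Finset.mul_sum]
  have hQpos : 0 < Q := by
    rcases hQ0.eq_or_lt with h | h
    · exfalso
      have hall := (Finset.sum_eq_zero_iff_of_nonneg
        (fun i (_ : i ∈ univ) => mul_nonneg (sq_nonneg (1 - f i)) (hΔv i).le)).mp
        (by rw [← hQdef]; exact h.symm)
      have hf1 : ∀ i, f i = 1 := by
        intro i
        have h0 := hall i (mem_univ i)
        rcases mul_eq_zero.mp h0 with h' | h'
        · nlinarith [sq_nonneg (1 - f i), h']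
        · exact absurd h' (hΔv i).ne'
      have hηf : (∑ i, f i * Real.log (f i) * Δv i) = 0 := by
        apply Finset.sum_eq_zero
        intro i _
        rw [hf1 i]; simp
      have hηg : 0 ≤ ∑ i, g i * Real.log (g i) * Δv i := by
        have hper : ∀ i, (g i - 1) * Δv i ≤ g i * Real.log (g i) * Δv i :=
          fun i => mul_le_mul_of_nonneg_right (phi_lb (hg0 i)) (hΔv i).le
        have hsum0 : (∑ i, (g i - 1) * Δv i) = 0 := by
          have e : ∀ i, (g i - 1) * Δv i = g i * Δv i - Δv i := fun i => by ring
          rw [Finset.sum_congr rfl fun i _ => e i, Finset.sum_sub_distrib, hmg, hVdef]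
          ring
        calc (0:ℝ) = ∑ i, (g i - 1) * Δv i := hsum0.symm
          _ ≤ _ := Finset.sum_le_sum fun i _ => hper i
      rw [hηf] at hent; linarith
    · exact h
  have hsV0 : 0 ≤ sV := by rw [hsVdef]; exact Real.sqrt_nonneg _
  have hR0 : 0 ≤ R := by
    rw [hRdef]; apply mul_nonneg (by linarith) hsV0
  have hlog43 : 0 < Real.log (4/3) := Real.log_pos (by norm_num)
  have hlog8A : 0 ≤ Real.log (8*A) := Real.log_nonneg (by linarith)
  have hC80 : 0 ≤ C8 := by
    rw [hC8def]
    have : 0 ≤ (1 + Real.log (8*A)) / Real.log (4/3) :=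
      div_nonneg (by linarith) hlog43.le
    linarith
  have hgoal_eq : (∑ i, (β * (1 - f i))^2 * Δv i) = β^2 * Q := by
    rw [hQdef, Finset.mul_sum]
    exact Finset.sum_congr rfl fun i _ => by ring
  have hMeq : Mbig V sf (⨆ i, g i)
      = 64*A*R + R + 4*A*sV + sV + (16*A/3)*sV + 4*C8*R := by
    simp only [Mbig]
    rw [← hAdef, ← hsVdef, ← hRdef, ← hC8def]
  rw [hgoal_eq, hMeq]
  -- it now suffices to establish the bound with any one of the summands
  have hn1 : 0 ≤ 64*A*R := by positivity
  have hn2 : 0 ≤ 4*A*sV := by positivity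
  have hn3 : 0 ≤ 16*A/3*sV := by positivity
  have hn4 : 0 ≤ 4*C8*R := by positivity
  have hpad : ∀ c : ℝ,
      c ≤ 64*A*R + R + 4*A*sV + sV + (16*A/3)*sV + 4*C8*R →
      Real.sqrt (β^2*Q) ≤ c * δ →
      Real.sqrt (β^2*Q) ≤ (64*A*R + R + 4*A*sV + sV + (16*A/3)*sV + 4*C8*R) * δ := by
    intro c hcle hle
    exact hle.trans (mul_le_mul_of_nonneg_right hcle hδnn)
  -- block A: shared machinery
  set T := ∑ i, |1 - f i| * Δv i with hTdef
  clear_value T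
  have hT0 : 0 ≤ T := by
    rw [hTdef]; exact Finset.sum_nonneg fun i _ => mul_nonneg (abs_nonneg _) (hΔv i).le
  have hT2 : T^2 ≤ V * Q := by
    have h := Finset.sum_mul_sq_le_sq_mul_sq univ (fun i => Real.sqrt (Δv i))
      (fun i => |1 - f i| * Real.sqrt (Δv i))
    have e1 : (∑ i, Real.sqrt (Δv i) * (|1 - f i| * Real.sqrt (Δv i))) = T := by
      rw [hTdef]
      refine Finset.sum_congr rfl fun i _ => ?_
      rw [show Real.sqrt (Δv i) * (|1 - f i| * Real.sqrt (Δv i))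
            = |1 - f i| * (Real.sqrt (Δv i) * Real.sqrt (Δv i)) by ring,
        Real.mul_self_sqrt (hΔv i).le]
    have e2 : (∑ i, Real.sqrt (Δv i)^2) = V := by
      rw [hVdef]
      exact Finset.sum_congr rfl fun i _ => Real.sq_sqrt (hΔv i).le
    have e3 : (∑ i, (|1 - f i| * Real.sqrt (Δv i))^2) = Q := by
      rw [hQdef]
      refine Finset.sum_congr rfl fun i _ => ?_
      rw [mul_pow, sq_abs, Real.sq_sqrt (hΔv i).le]
    rw [e1, e2, e3] at h
    exact h
  have hsum_u : ∑ i, (1 - f i) * Δv i = 0 := by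
    have e : ∀ i, (1 - f i) * Δv i = Δv i - f i * Δv i := fun i => by ring
    rw [Finset.sum_congr rfl fun i _ => e i, Finset.sum_sub_distrib, hmf]
    rw [hVdef]; ring
  have hz_pos : ∀ i, 0 < (1-β) * f i + β := fun i => by nlinarith [hf0 i]
  have hfix' : (∑ i, ((1-β) * f i + β) * Real.log ((1-β) * f i + β) * Δv i)
      = ∑ i, g i * Real.log (g i) * Δv i := by
    rw [← hfix]
    refine Finset.sum_congr rfl fun i _ => ?_
    rw [show f i + β * (1 - f i) = (1-β) * f i + β by ring]
  have hmz : ∑ i, ((1-β) * f i + β) * Δv i = V := by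
    have e : ∀ i, ((1-β) * f i + β) * Δv i = (1-β) * (f i * Δv i) + β * Δv i := fun i => by ring
    rw [Finset.sum_congr rfl fun i _ => e i, Finset.sum_add_distrib,
      ← Finset.mul_sum, ← Finset.mul_sum, hmf]
    rw [hVdef]; ring
  have grad_sum : ∀ y : Fin N → ℝ, (∀ i, 0 ≤ y i) → (∑ i, y i * Δv i) = V →
      (∑ i, Real.log ((1-β) * f i + β) * ((y i - ((1-β) * f i + β)) * Δv i))
        ≤ (∑ i, y i * Real.log (y i) * Δv i)
          - (∑ i, ((1-β) * f i + β) * Real.log ((1-β) * f i + β) * Δv i) := by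
    intro y hy hmy
    have hper : ∀ i, (((1-β) * f i + β) * Real.log ((1-β) * f i + β)
        + (Real.log ((1-β) * f i + β) + 1) * (y i - ((1-β) * f i + β))) * Δv i
        ≤ y i * Real.log (y i) * Δv i :=
      fun i => mul_le_mul_of_nonneg_right (phi_grad (hz_pos i) (hy i)) (hΔv i).le
    have hs := Finset.sum_le_sum (fun i (_ : i ∈ univ) => hper i)
    have expand : ∀ i, (((1-β) * f i + β) * Real.log ((1-β) * f i + β)
        + (Real.log ((1-β) * f i + β) + 1) * (y i - ((1-β) * f i + β))) * Δv i
        = ((1-β) * f i + β) * Real.log ((1-β) * f i + β) * Δv i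
          + Real.log ((1-β) * f i + β) * ((y i - ((1-β) * f i + β)) * Δv i)
          + (y i * Δv i - ((1-β) * f i + β) * Δv i) := fun i => by ring
    rw [Finset.sum_congr rfl fun i _ => expand i, Finset.sum_add_distrib,
      Finset.sum_add_distrib, Finset.sum_sub_distrib, hmy, hmz] at hs
    linarith
  set D := ∑ i, (1 - f i) * (-Real.log ((1-β) * f i + β)) * Δv i with hDdef
  clear_value D
  have hDQ : (1-β) * Q / A ≤ D := by
    rw [hDdef, hQdef]
    have e : (1-β) * (∑ i, (1 - f i)^2 * Δv i) / A
        = ∑ i, ((1-β) * (1 - f i)^2 / A) * Δv i := by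
      rw [Finset.mul_sum, Finset.sum_div]
      exact Finset.sum_congr rfl fun i _ => by ring
    rw [e]
    exact Finset.sum_le_sum fun i _ =>
      mul_le_mul_of_nonneg_right (Dcell (hf0 i) (hfA i) hA1 hβ0 hβ1) (hΔv i).le
  have hD0 : 0 ≤ D :=
    le_trans (div_nonneg (mul_nonneg (by linarith) hQ0) hApos.le) hDQ
  have hβD_eta : β * D ≤ (∑ i, f i * Real.log (f i) * Δv i)
      - (∑ i, g i * Real.log (g i) * Δv i) := by
    have h := grad_sum f hf0 hmf
    rw [hfix'] at h
    have e : (∑ i, Real.log ((1-β) * f i + β) * ((f i - ((1-β) * f i + β)) * Δv i))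
        = β * D := by
      rw [hDdef, Finset.mul_sum]
      exact Finset.sum_congr rfl fun i _ => by ring
    rw [e] at h
    exact h
  have hβD_star : β * D ≤ δ * (∑ i, |Real.log ((1-β) * f i + β)| * Δv i) := by
    have h := grad_sum g hg0 hmg
    rw [hfix', sub_self] at h
    have e : (∑ i, Real.log ((1-β) * f i + β) * ((g i - ((1-β) * f i + β)) * Δv i))
        = (∑ i, Real.log ((1-β) * f i + β) * ((g i - f i) * Δv i)) + β * D := by
      rw [hDdef, Finset.mul_sum, ← Finset.sum_add_distrib]
      exact Finset.sum_congr rfl fun i _ => by ring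
    rw [e] at h
    have h2 : (∑ i, -(Real.log ((1-β) * f i + β) * ((g i - f i) * Δv i)))
        ≤ ∑ i, |Real.log ((1-β) * f i + β)| * δ * Δv i := by
      apply Finset.sum_le_sum
      intro i _
      have ha : -(Real.log ((1-β) * f i + β) * (g i - f i))
          ≤ |Real.log ((1-β) * f i + β)| * δ := by
        calc -(Real.log ((1-β) * f i + β) * (g i - f i))
            ≤ |Real.log ((1-β) * f i + β) * (g i - f i)| := neg_le_abs _
          _ = |Real.log ((1-β) * f i + β)| * |g i - f i| := abs_mul _ _
          _ ≤ |Real.log ((1-β) * f i + β)| * δ := by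
              apply mul_le_mul_of_nonneg_left ?_ (abs_nonneg _)
              rw [abs_sub_comm]; exact hei i
      calc -(Real.log ((1-β) * f i + β) * ((g i - f i) * Δv i))
          = -(Real.log ((1-β) * f i + β) * (g i - f i)) * Δv i := by ring
        _ ≤ |Real.log ((1-β) * f i + β)| * δ * Δv i :=
            mul_le_mul_of_nonneg_right ha (hΔv i).le
    rw [Finset.sum_neg_distrib] at h2
    have e2 : (∑ i, |Real.log ((1-β) * f i + β)| * δ * Δv i)
        = δ * ∑ i, |Real.log ((1-β) * f i + β)| * Δv i := by
      rw [Finset.mul_sum]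
      exact Finset.sum_congr rfl fun i _ => by ring
    rw [e2] at h2
    linarith
  -- helpers for final bounds
  have hsV2 : sV^2 = V := by rw [hsVdef]; exact Real.sq_sqrt hVpos.le
  have hQR : Q ≤ R^2 := by
    rw [hRdef, mul_pow, hsV2]; exact hQcap
  have hsq : ∀ c : ℝ, 0 ≤ c → β^2*Q ≤ (c*δ)^2 → Real.sqrt (β^2*Q) ≤ c*δ := by
    intro c hc hle
    calc Real.sqrt (β^2*Q) ≤ Real.sqrt ((c*δ)^2) := Real.sqrt_le_sqrt hle
      _ = c*δ := Real.sqrt_sq (mul_nonneg hc hδnn)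
  -- Case C0 : δ not small
  rcases le_or_gt (1/(64*A)) δ with hc0 | hc0
  · apply hpad (64*A*R) (by linarith)
    apply hsq _ (by positivity)
    have h64 : 1 ≤ 64*A*δ := by
      rw [div_le_iff₀ (by positivity : (0:ℝ) < 64*A)] at hc0
      linarith only [hc0]
    have hb : β^2*Q ≤ Q := by
      nlinarith only [hQ0, hβ0, hβ1, mul_nonneg (mul_nonneg (sub_nonneg.2 hβ1)
        (show (0:ℝ) ≤ 1 + β by linarith only [hβ0])) hQ0]
    have key : 0 ≤ R^2*((64*A*δ)^2 - 1) := by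
      have h64b : (0:ℝ) ≤ 64*A*δ + 1 := by linarith only [h64]
      have h64c := mul_nonneg (sub_nonneg.2 h64) h64b
      have : (0:ℝ) ≤ (64*A*δ)^2 - 1 := by nlinarith only [h64c]
      exact mul_nonneg (sq_nonneg R) this
    nlinarith only [hb, hQR, key]
  -- Case C3 : β ≤ δ
  rcases le_or_gt β δ with hc3 | hc3
  · apply hpad R (by linarith)
    apply hsq _ hR0
    have h1 : β^2 ≤ δ^2 := by
      nlinarith only [hc3, hβ0, mul_nonneg (sub_nonneg.2 hc3)
        (show (0:ℝ) ≤ δ + β by linarith only [hβ0, hc3])]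
    nlinarith only [mul_le_mul h1 hQR hQ0 (sq_nonneg δ)]
  -- main split on β vs 2√(Aδ)
  have hAδ0 : (0:ℝ) ≤ A*δ := mul_nonneg hApos.le hδnn
  have hsqAδ : (Real.sqrt (A*δ))^2 = A*δ := Real.sq_sqrt hAδ0
  rcases le_or_gt (2*Real.sqrt (A*δ)) β with hc1 | hc1
  · -- Case C1
    have h4Aδ : 4*(A*δ) ≤ β^2 := by
      have hs0 : (0:ℝ) ≤ Real.sqrt (A*δ) := Real.sqrt_nonneg _
      have hp : 0 ≤ (β - 2*Real.sqrt (A*δ)) * (β + 2*Real.sqrt (A*δ)) :=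
        mul_nonneg (sub_nonneg.2 hc1) (by linarith only [hβ0, hs0])
      nlinarith only [hp, hsqAδ]
    rcases eq_or_lt_of_le hβ1 with hβeq | hβlt
    · -- subcase β = 1, then g ≡ 1
      have hg1 : (∑ i, g i * Real.log (g i) * Δv i) = 0 := by
        rw [← hfix']
        apply Finset.sum_eq_zero
        intro i _
        rw [hβeq]
        norm_num
      have hψnn : ∀ i ∈ univ, 0 ≤ (g i * Real.log (g i) - g i + 1) * Δv i := fun i _ =>
        mul_nonneg (by linarith only [psi_sqrt (hg0 i), sq_nonneg (Real.sqrt (g i) - 1)])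
          (hΔv i).le
      have hψ0 : (∑ i, (g i * Real.log (g i) - g i + 1) * Δv i) = 0 := by
        have e : ∀ i, (g i * Real.log (g i) - g i + 1) * Δv i
            = (g i * Real.log (g i) * Δv i - g i * Δv i) + Δv i := fun i => by ring
        rw [Finset.sum_congr rfl fun i _ => e i, Finset.sum_add_distrib,
          Finset.sum_sub_distrib, hg1, hmg, ← hVdef]
        ring
      have hg1' : ∀ i, g i = 1 := by
        intro i
        have h0 := (Finset.sum_eq_zero_iff_of_nonneg hψnn).mp hψ0 i (mem_univ i)
        have h1 : g i * Real.log (g i) - g i + 1 = 0 := by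
          rcases mul_eq_zero.mp h0 with h' | h'
          · exact h'
          · exact absurd h' (hΔv i).ne'
        have h2 := psi_sqrt (hg0 i)
        have h3 : Real.sqrt (g i) = 1 := by
          nlinarith only [h1, h2, sq_nonneg (Real.sqrt (g i) - 1)]
        have h4 := Real.mul_self_sqrt (hg0 i)
        rw [h3] at h4
        linarith only [h4]
      apply hpad sV (by linarith)
      apply hsq _ hsV0
      have hQδ : Q ≤ δ^2*V := by
        rw [hQdef, hVdef, Finset.mul_sum]
        apply Finset.sum_le_sum
        intro i _
        apply mul_le_mul_of_nonneg_right ?_ (hΔv i).le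
        have h5 := hei i
        rw [hg1' i] at h5
        nlinarith only [mul_self_le_mul_self (abs_nonneg (f i - 1)) h5,
          sq_abs (f i - 1), abs_nonneg (f i - 1)]
      have hb : β^2*Q ≤ Q := by
        nlinarith only [hQ0, hβ0, hβ1, mul_nonneg (mul_nonneg (sub_nonneg.2 hβ1)
          (show (0:ℝ) ≤ 1 + β by linarith only [hβ0])) hQ0]
      have e : (sV*δ)^2 = (sV^2)*δ^2 := by ring
      rw [hsV2] at e
      linarith only [hb, hQδ, e]
    · -- subcase β < 1
      have hlog_sum : (∑ i, |Real.log ((1-β)*f i + β)| * Δv i)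
          ≤ 2*(1-β)*T + 2*(1-β)*Q/β := by
        have e : 2*(1-β)*T + 2*(1-β)*Q/β
            = ∑ i, (2*(1-β)*|1 - f i| + 2*(1-β)*(1 - f i)^2/β) * Δv i := by
          rw [hTdef, hQdef, Finset.mul_sum, Finset.mul_sum, Finset.sum_div,
            ← Finset.sum_add_distrib]
          exact Finset.sum_congr rfl fun i _ => by ring
        rw [e]
        exact Finset.sum_le_sum fun i _ =>
          mul_le_mul_of_nonneg_right (F9cell (hf0 i) hβ0 hβ1) (hΔv i).le
      have h1β : (0:ℝ) < 1 - β := by linarith only [hβlt]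
      have key : β*Q/A ≤ 2*δ*T + 2*δ*Q/β := by
        have hh : (β*Q/A)*(1-β) ≤ (2*δ*T + 2*δ*Q/β)*(1-β) := by
          calc (β*Q/A)*(1-β) = β*((1-β)*Q/A) := by ring
            _ ≤ β*D := mul_le_mul_of_nonneg_left hDQ hβ0.le
            _ ≤ δ*(∑ i, |Real.log ((1-β)*f i + β)| * Δv i) := hβD_star
            _ ≤ δ*(2*(1-β)*T + 2*(1-β)*Q/β) := mul_le_mul_of_nonneg_left hlog_sum hδnn
            _ = (2*δ*T + 2*δ*Q/β)*(1-β) := by ring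
        exact le_of_mul_le_mul_right hh h1β
      have h2δQ : 2*δ*Q/β ≤ β*Q/(2*A) := by
        rw [div_le_div_iff₀ hβ0 (by positivity : (0:ℝ) < 2*A)]
        have hint := mul_le_mul_of_nonneg_right h4Aδ hQ0
        nlinarith only [hint]
      have hfin1 : β*Q/(2*A) ≤ 2*δ*T := by
        have e : β*Q/A = 2*(β*Q/(2*A)) := by ring
        linarith only [key, h2δQ, e]
      have hβQ : β*Q ≤ 4*A*δ*T := by
        rw [div_le_iff₀ (by positivity : (0:ℝ) < 2*A)] at hfin1
        nlinarith only [hfin1]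
      apply hpad (4*A*sV) (by linarith)
      apply hsq _ (by positivity)
      have hsq1 : (β*Q)^2 ≤ (4*A*δ*T)^2 := by
        nlinarith only [mul_self_le_mul_self (mul_nonneg hβ0.le hQ0) hβQ]
      have hsq2 : (4*A*δ*T)^2 ≤ 16*A^2*δ^2*(V*Q) := by
        have hint := mul_le_mul_of_nonneg_left hT2
          (show (0:ℝ) ≤ 16*A^2*δ^2 by positivity)
        nlinarith only [hint]
      have hcan : (β^2*Q)*Q ≤ (16*A^2*δ^2*V)*Q := by
        have h := hsq1.trans hsq2
        nlinarith only [h]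
      have hfin : β^2*Q ≤ 16*A^2*δ^2*V := le_of_mul_le_mul_right hcan hQpos
      have e : (4*A*sV*δ)^2 = 16*A^2*(sV^2)*δ^2 := by ring
      rw [hsV2] at e
      linarith only [hfin, e]
  · -- Case C2 : δ < β < 2√(Aδ), δ < 1/(64A)
    have hβ2 : β^2 ≤ 4*(A*δ) := by
      have hs0 : (0:ℝ) ≤ Real.sqrt (A*δ) := Real.sqrt_nonneg _
      have hp : 0 < (2*Real.sqrt (A*δ) - β) * (2*Real.sqrt (A*δ) + β) :=
        mul_pos (sub_pos.2 hc1) (by linarith only [hβ0, hs0])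
      nlinarith only [hp, hsqAδ]
    have hβ14 : β ≤ 1/4 := by
      have hAδ64 : A*δ ≤ 1/64 := by
        have h1 : A*δ ≤ A*(1/(64*A)) := mul_le_mul_of_nonneg_left hc0.le hApos.le
        have h2 : A*(1/(64*A)) = 1/64 := by field_simp
        linarith only [h1, h2]
      have h4 : Real.sqrt (A*δ) ≤ Real.sqrt (1/64) := Real.sqrt_le_sqrt hAδ64
      have h5 : Real.sqrt (1/64 : ℝ) = 1/8 := by
        rw [show (1/64 : ℝ) = (1/8)^2 by norm_num, Real.sqrt_sq (by norm_num)]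
      linarith only [hc1, h4, h5]
    have hβ34 : (3:ℝ)/4 ≤ 1 - β := by linarith only [hβ14]
    set Bd := Finset.univ.filter (fun i => f i < 1/2) with hBddef
    have hBdmem : ∀ i ∈ Bd, f i < 1/2 := fun i hi => (Finset.mem_filter.mp hi).2
    have hGdmem : ∀ i ∈ Finset.univ.filter (fun i => ¬(f i < 1/2)), 1/2 ≤ f i :=
      fun i hi => not_lt.mp (Finset.mem_filter.mp hi).2
    have hfβpos : ∀ i, (0:ℝ) < f i + β := fun i => by linarith only [hf0 i, hβ0]
    have hbadlog : ∀ i ∈ Bd, Real.log (4/3) ≤ -Real.log (f i + β) := by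
      intro i hi
      have h1 : Real.log (f i + β) ≤ Real.log (3/4) :=
        Real.log_le_log (hfβpos i) (by linarith only [hBdmem i hi, hβ14])
      have h2 : Real.log (3/4 : ℝ) = -Real.log (4/3) := by
        rw [show (3/4 : ℝ) = (4/3)⁻¹ by norm_num, Real.log_inv]
      linarith only [h1, h2]
    set S := ∑ i ∈ Bd, (-Real.log (f i + β)) * Δv i with hSdef
    clear_value S
    have hSvol : Real.log (4/3) * (∑ i ∈ Bd, Δv i) ≤ S := by
      rw [hSdef, Finset.mul_sum]
      exact Finset.sum_le_sum fun i hi =>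
        mul_le_mul_of_nonneg_right (hbadlog i hi) (hΔv i).le
    have hS0 : 0 ≤ S := by
      rw [hSdef]
      exact Finset.sum_nonneg fun i hi =>
        mul_nonneg (le_trans hlog43.le (hbadlog i hi)) (hΔv i).le
    -- splits of Q and D
    set Qbd := ∑ i ∈ Bd, (1 - f i)^2 * Δv i with hQbddef
    set Qgd := ∑ i ∈ Finset.univ.filter (fun i => ¬(f i < 1/2)), (1 - f i)^2 * Δv i with hQgddef
    set Dbd := ∑ i ∈ Bd, (1 - f i) * (-Real.log ((1-β) * f i + β)) * Δv i with hDbddef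
    set Dgd := ∑ i ∈ Finset.univ.filter (fun i => ¬(f i < 1/2)),
      (1 - f i) * (-Real.log ((1-β) * f i + β)) * Δv i with hDgddef
    have hQsplit : Qbd + Qgd = Q := by
      rw [hQbddef, hQgddef, hQdef, hBddef]
      exact Finset.sum_filter_add_sum_filter_not _ _ _
    have hDsplit : Dbd + Dgd = D := by
      rw [hDbddef, hDgddef, hDdef, hBddef]
      exact Finset.sum_filter_add_sum_filter_not _ _ _
    have hQbd0 : 0 ≤ Qbd := by
      rw [hQbddef]
      exact Finset.sum_nonneg fun i _ => mul_nonneg (sq_nonneg _) (hΔv i).le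
    have hQgd0 : 0 ≤ Qgd := by
      rw [hQgddef]
      exact Finset.sum_nonneg fun i _ => mul_nonneg (sq_nonneg _) (hΔv i).le
    clear_value Qbd Qgd Dbd Dgd
    have hDbd1 : 3/4*(Qbd/A) ≤ Dbd := by
      rw [hQbddef, hDbddef]
      have e : 3/4*((∑ i ∈ Bd, (1 - f i)^2 * Δv i)/A)
          = ∑ i ∈ Bd, (3/4*((1 - f i)^2/A)) * Δv i := by
        rw [Finset.sum_div, Finset.mul_sum]
        exact Finset.sum_congr rfl fun i _ => by ring
      rw [e]
      apply Finset.sum_le_sum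
      intro i _
      have h1 := Dcell (hf0 i) (hfA i) hA1 hβ0 hβ1
      have h2 : 3/4*((1 - f i)^2/A) ≤ (1-β) * (1 - f i)^2 / A := by
        rw [show 3/4*((1 - f i)^2/A) = (3/4*(1 - f i)^2)/A by ring]
        apply div_le_div_of_nonneg_right ?_ hApos.le
        nlinarith only [mul_nonneg (show (0:ℝ) ≤ (1-β) - 3/4 by linarith only [hβ34])
          (sq_nonneg (1 - f i))]
      exact mul_le_mul_of_nonneg_right (h2.trans h1) (hΔv i).le
    have hDgd1 : 3/4*(Qgd/A) ≤ Dgd := by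
      rw [hQgddef, hDgddef]
      have e : 3/4*((∑ i ∈ Finset.univ.filter (fun i => ¬(f i < 1/2)), (1 - f i)^2 * Δv i)/A)
          = ∑ i ∈ Finset.univ.filter (fun i => ¬(f i < 1/2)), (3/4*((1 - f i)^2/A)) * Δv i := by
        rw [Finset.sum_div, Finset.mul_sum]
        exact Finset.sum_congr rfl fun i _ => by ring
      rw [e]
      apply Finset.sum_le_sum
      intro i _
      have h1 := Dcell (hf0 i) (hfA i) hA1 hβ0 hβ1
      have h2 : 3/4*((1 - f i)^2/A) ≤ (1-β) * (1 - f i)^2 / A := by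
        rw [show 3/4*((1 - f i)^2/A) = (3/4*(1 - f i)^2)/A by ring]
        apply div_le_div_of_nonneg_right ?_ hApos.le
        nlinarith only [mul_nonneg (show (0:ℝ) ≤ (1-β) - 3/4 by linarith only [hβ34])
          (sq_nonneg (1 - f i))]
      exact mul_le_mul_of_nonneg_right (h2.trans h1) (hΔv i).le
    have hDbd2 : S/2 ≤ Dbd := by
      rw [hDbddef, hSdef, Finset.sum_div]
      apply Finset.sum_le_sum
      intro i hi
      have h1 := badcell_D (hf0 i) (hBdmem i hi) hβ0 hβ14
      calc (-Real.log (f i + β)) * Δv i / 2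
          = (1/2*(-Real.log (f i + β))) * Δv i := by ring
        _ ≤ (1 - f i) * (-Real.log ((1-β) * f i + β)) * Δv i :=
            mul_le_mul_of_nonneg_right h1 (hΔv i).le
    have hD_ge : 3/8*(Q/A) + S/4 ≤ D := by
      have hQA : Q/A = Qbd/A + Qgd/A := by rw [← hQsplit, add_div]
      rw [hQA, ← hDsplit]
      have d1 : 0 ≤ Qbd/A := div_nonneg hQbd0 hApos.le
      have d2 : 0 ≤ Qgd/A := div_nonneg hQgd0 hApos.le
      linarith only [hDbd1, hDbd2, hDgd1, d1, d2]
    -- entropy difference bound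
    have hmfg : (∑ i, (f i - g i) * Δv i) = 0 := by
      have e : ∀ i, (f i - g i) * Δv i = f i * Δv i - g i * Δv i := fun i => by ring
      rw [Finset.sum_congr rfl fun i _ => e i, Finset.sum_sub_distrib, hmf, hmg]
      ring
    have hEsplit : (∑ i, f i * Real.log (f i) * Δv i) - (∑ i, g i * Real.log (g i) * Δv i)
        = ∑ i, (f i * Real.log (f i) - g i * Real.log (g i) - (f i - g i)) * Δv i := by
      have e : ∀ i, (f i * Real.log (f i) - g i * Real.log (g i) - (f i - g i)) * Δv i
          = f i * Real.log (f i) * Δv i - g i * Real.log (g i) * Δv i - (f i - g i) * Δv i :=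
        fun i => by ring
      rw [Finset.sum_congr rfl fun i _ => e i, Finset.sum_sub_distrib,
        Finset.sum_sub_distrib, hmfg]
      ring
    have hgood : (∑ i ∈ Finset.univ.filter (fun i => ¬(f i < 1/2)),
        (f i * Real.log (f i) - g i * Real.log (g i) - (f i - g i)) * Δv i) ≤ 2*δ*T := by
      have h1 : ∀ i ∈ Finset.univ.filter (fun i => ¬(f i < 1/2)),
          (f i * Real.log (f i) - g i * Real.log (g i) - (f i - g i)) * Δv i
          ≤ (2*δ*|1 - f i|) * Δv i := fun i hi =>
        mul_le_mul_of_nonneg_right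
          (by have h2 := goodcell (hGdmem i hi) (hg0 i) (hei i); linarith only [h2])
          (hΔv i).le
      calc (∑ i ∈ Finset.univ.filter (fun i => ¬(f i < 1/2)),
            (f i * Real.log (f i) - g i * Real.log (g i) - (f i - g i)) * Δv i)
          ≤ ∑ i ∈ Finset.univ.filter (fun i => ¬(f i < 1/2)), (2*δ*|1 - f i|) * Δv i :=
            Finset.sum_le_sum h1
        _ ≤ ∑ i, (2*δ*|1 - f i|) * Δv i :=
            Finset.sum_le_sum_of_subset_of_nonneg (Finset.filter_subset _ _)
              (fun i _ _ => mul_nonneg (mul_nonneg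
                (by linarith only [hδnn] : (0:ℝ) ≤ 2*δ) (abs_nonneg _)) (hΔv i).le)
        _ = 2*δ*T := by
            rw [hTdef, Finset.mul_sum]
            exact Finset.sum_congr rfl fun i _ => by ring
    have hbad : (∑ i ∈ Bd, (f i * Real.log (f i) - g i * Real.log (g i) - (f i - g i)) * Δv i)
        ≤ δ*(1 + Real.log (8*A))*(∑ i ∈ Bd, Δv i) + 2*δ*S := by
      have h1 : ∀ i ∈ Bd,
          (f i * Real.log (f i) - g i * Real.log (g i) - (f i - g i)) * Δv i
          ≤ (δ*(1 + Real.log (8*A))) * Δv i + (2*δ)*((-Real.log (f i + β)) * Δv i) := by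
        intro i hi
        have hfi := hBdmem i hi
        have hB : (f i + β)^2 ≤ 8*A*(f i + δ) := by
          nlinarith only [hβ2, hf0 i, hfA i, hA1, hβ14, hδnn, hApos,
            mul_nonneg (hf0 i) (sub_nonneg.2 (hfA i)),
            mul_nonneg (hf0 i) (show (0:ℝ) ≤ A - 1/2 by linarith only [hA1]),
            mul_nonneg (hf0 i) (show (0:ℝ) ≤ 1/2 - 2*β by linarith only [hβ14]),
            mul_nonneg hApos.le hδnn]
        have hfb : f i + β ≤ 3/4 := by linarith only [hfi, hβ14]
        have h2 := badcell_eta (hf0 i) hfi (hg0 i) (hei i) hδpos hδ3 hβ0 hA1 hB hfb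
        have h3 := mul_le_mul_of_nonneg_right h2 (hΔv i).le
        calc (f i * Real.log (f i) - g i * Real.log (g i) - (f i - g i)) * Δv i
            ≤ (δ * (1 + Real.log (8*A) + 2*(-Real.log (f i + β)))) * Δv i := h3
          _ = (δ*(1 + Real.log (8*A))) * Δv i + (2*δ)*((-Real.log (f i + β)) * Δv i) := by
              ring
      calc (∑ i ∈ Bd, (f i * Real.log (f i) - g i * Real.log (g i) - (f i - g i)) * Δv i)
          ≤ ∑ i ∈ Bd, ((δ*(1 + Real.log (8*A))) * Δv i
              + (2*δ)*((-Real.log (f i + β)) * Δv i)) := Finset.sum_le_sum h1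
        _ = δ*(1 + Real.log (8*A))*(∑ i ∈ Bd, Δv i) + 2*δ*S := by
            rw [Finset.sum_add_distrib, ← Finset.mul_sum, ← Finset.mul_sum, hSdef]
    have hvolS : (∑ i ∈ Bd, Δv i) ≤ S/Real.log (4/3) := by
      rw [le_div_iff₀ hlog43]
      nlinarith only [hSvol]
    have hEbound : (∑ i, (f i * Real.log (f i) - g i * Real.log (g i) - (f i - g i)) * Δv i)
        ≤ 2*δ*T + δ*C8*S := by
      have hsplitE : (∑ i, (f i * Real.log (f i) - g i * Real.log (g i) - (f i - g i)) * Δv i)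
          = (∑ i ∈ Bd, (f i * Real.log (f i) - g i * Real.log (g i) - (f i - g i)) * Δv i)
            + (∑ i ∈ Finset.univ.filter (fun i => ¬(f i < 1/2)),
                (f i * Real.log (f i) - g i * Real.log (g i) - (f i - g i)) * Δv i) := by
        rw [hBddef]
        exact (Finset.sum_filter_add_sum_filter_not _ _ _).symm
      rw [hsplitE]
      have h2 : δ*(1 + Real.log (8*A))*(∑ i ∈ Bd, Δv i)
          ≤ δ*(1 + Real.log (8*A))*(S/Real.log (4/3)) :=
        mul_le_mul_of_nonneg_left hvolS
          (mul_nonneg hδnn (by linarith only [hlog8A]))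
      have hC8e : δ*C8*S = δ*(1 + Real.log (8*A))*(S/Real.log (4/3)) + 2*δ*S := by
        rw [hC8def]
        field_simp
      linarith only [hbad, hgood, h2, hC8e]
    have hβDE : β*D ≤ 2*δ*T + δ*C8*S := by
      have h := hβD_eta
      rw [hEsplit] at h
      exact h.trans hEbound
    -- conclude
    have hDpos : 0 < D := by
      have h1 : 0 < Q/A := div_pos hQpos hApos
      linarith only [hD_ge, h1, hS0]
    set r := Real.sqrt Q with hrdef
    have hr0 : 0 ≤ r := by rw [hrdef]; exact Real.sqrt_nonneg _
    have hrr : r*r = Q := by rw [hrdef]; exact Real.mul_self_sqrt hQ0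
    have hrR : r ≤ R := by
      rw [hrdef]
      calc Real.sqrt Q ≤ Real.sqrt (R^2) := Real.sqrt_le_sqrt hQR
        _ = R := Real.sqrt_sq hR0
    have hTr : T ≤ sV*r := by
      rw [hrdef, hsVdef]
      calc T = Real.sqrt (T^2) := (Real.sqrt_sq hT0).symm
        _ ≤ Real.sqrt (V*Q) := Real.sqrt_le_sqrt hT2
        _ = Real.sqrt V * Real.sqrt Q := Real.sqrt_mul hVpos.le Q
    clear_value r
    have step1 : (β*r)*D ≤ 2*δ*(sV*Q) + δ*C8*(S*R) := by
      have s2 : (β*D)*r ≤ (2*δ*T + δ*C8*S)*r := mul_le_mul_of_nonneg_right hβDE hr0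
      have s4 : T*r ≤ sV*(r*r) := by
        have h := mul_le_mul_of_nonneg_right hTr hr0
        nlinarith only [h]
      have s4' : T*r ≤ sV*Q := by rw [← hrr]; exact s4
      have s5 : S*r ≤ S*R := mul_le_mul_of_nonneg_left hrR hS0
      have s6 : 2*δ*(T*r) ≤ 2*δ*(sV*Q) :=
        mul_le_mul_of_nonneg_left s4' (by linarith only [hδnn])
      have s7 : δ*C8*(S*r) ≤ δ*C8*(S*R) :=
        mul_le_mul_of_nonneg_left s5 (mul_nonneg hδnn hC80)
      nlinarith only [s2, s6, s7]
    have step2 : 2*δ*(sV*Q) + δ*C8*(S*R)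
        ≤ ((16*A/3*sV + 4*C8*R)*δ)*(3/8*(Q/A) + S/4) := by
      have e1 : (16*A/3*sV*δ)*(3/8*(Q/A)) = 2*δ*(sV*Q) := by
        field_simp
        ring
      have e2 : (4*C8*R*δ)*(S/4) = δ*C8*(S*R) := by ring
      have x1 : 0 ≤ (16*A/3*sV*δ)*(S/4) :=
        mul_nonneg (mul_nonneg (mul_nonneg (by positivity) hsV0) hδnn)
          (by linarith only [hS0])
      have x2 : 0 ≤ (4*C8*R*δ)*(3/8*(Q/A)) :=
        mul_nonneg (mul_nonneg (mul_nonneg (by linarith only [hC80]) hR0) hδnn)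
          (by positivity)
      nlinarith only [e1, e2, x1, x2]
    have step3 : ((16*A/3*sV + 4*C8*R)*δ)*(3/8*(Q/A) + S/4)
        ≤ ((16*A/3*sV + 4*C8*R)*δ)*D :=
      mul_le_mul_of_nonneg_left hD_ge
        (mul_nonneg (by nlinarith only [hn3, hn4]) hδnn)
    have hfinal : β*r ≤ (16*A/3*sV + 4*C8*R)*δ := by
      have h := (step1.trans step2).trans step3
      exact le_of_mul_le_mul_right h hDpos
    apply hpad (16*A/3*sV + 4*C8*R) (by linarith only [hn1, hn2, hR0, hsV0])
    have e : Real.sqrt (β^2*Q) = β*r := by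
      rw [hrdef, Real.sqrt_mul (sq_nonneg β) Q, Real.sqrt_sq hβ0.le]
    rw [e]
    exact hfinal
end
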